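/- arXiv:2010.14062 — 11 statements merged into one kernel-verified Lean document; each statement's English description precedes it below -/
import Mathlib

section
/- There exists a complex polynomial Q of degree exactly 2·N + Σ_c ℓ_c, with leading coefficient (−1)^N · ∏_c (a_c)^{ℓ_c}, such that for every z ∈ ℂ with p_c(a_c·z) ≠ 0 for all channels c one has det(A⁻¹(z)) · ∏_c p_c(a_c·z) = Q(z). (Hence, per sheet of the wavenumber–energy mapping, the radioactive problem det A⁻¹(z) = 0 has exactly 2·N + Σ_c ℓ_c solutions in wavenumber space, counted with multiplicity.) -/
/-!
Border `A⁻¹(z)` by the channels: with `P_c(z) = p_c(a_c z)` and `q_c = P_c · (L_c(a_c ·) - B_c)`,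
which is a polynomial of degree `≤ ℓ_c + 1`, the block matrix
`[[diag e - z², γ diag q], [γᵀ, diag P]]` has polynomial entries, and its Schur complement with
respect to `diag P` is `A⁻¹(z)`; so its determinant `Q` equals `det A⁻¹(z) · ∏ P_c(z)`.
Giving the level rows weight `2` and the channel columns weight `ℓ_c`, every entry has degree at
most the sum of its row and column weights, so `deg Q ≤ 2N + Σ ℓ_c`, and the coefficient in that
degree is the determinant of the block-triangular matrix `[[-1, 0], [γᵀ, diag a^ℓ]]` of top
coefficients.
-/

open Matrix Polynomial

namespace Polynomial

variable {R ι : Type*} [CommSemiring R]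

theorem coeff_prod_sum_of_natDegree_le (s : Finset ι) (f : ι → R[X]) (d : ι → ℕ)
    (h : ∀ i ∈ s, (f i).natDegree ≤ d i) :
    (∏ i ∈ s, f i).coeff (∑ i ∈ s, d i) = ∏ i ∈ s, (f i).coeff (d i) := by
  classical
  induction s using Finset.cons_induction with
  | empty => simp
  | cons a s has ih =>
    have hs : ∀ i ∈ s, (f i).natDegree ≤ d i := fun i hi => h i (Finset.mem_cons_of_mem hi)
    rw [Finset.prod_cons, Finset.prod_cons, Finset.sum_cons,
      coeff_mul_add_eq_of_natDegree_le (h a (Finset.mem_cons_self _ _))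
        ((natDegree_prod_le _ _).trans (Finset.sum_le_sum hs)), ih hs]

theorem natDegree_comp_C_mul_X_le {S : Type*} [Semiring S] (p : S[X]) (a : S) :
    (p.comp (C a * X)).natDegree ≤ p.natDegree :=
  natDegree_comp_le.trans <| by
    simpa using Nat.mul_le_mul_left _ ((natDegree_C_mul_le a X).trans natDegree_X_le)

end Polynomial

namespace Matrix

variable {n R : Type*} [CommRing R]

def weightedTopCoeff (M : Matrix n n R[X]) (r s : n → ℕ) : Matrix n n R :=
  of fun i j => (M i j).coeff (r i + s j)

variable [Fintype n] [DecidableEq n] {M : Matrix n n R[X]} {r s : n → ℕ}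

theorem natDegree_det_le_of_natDegree_le_add (h : ∀ i j, (M i j).natDegree ≤ r i + s j) :
    M.det.natDegree ≤ ∑ i, r i + ∑ i, s i := by
  rw [det_apply]
  refine natDegree_sum_le_of_forall_le _ _ fun σ _ => (natDegree_smul_le _ _).trans ?_
  calc (∏ i, M (σ i) i).natDegree ≤ ∑ i, (M (σ i) i).natDegree := natDegree_prod_le _ _
    _ ≤ ∑ i, (r (σ i) + s i) := Finset.sum_le_sum fun i _ => h _ _
    _ = ∑ i, r i + ∑ i, s i := by rw [Finset.sum_add_distrib, Equiv.sum_comp σ r]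

theorem coeff_det_of_natDegree_le_add (h : ∀ i j, (M i j).natDegree ≤ r i + s j) :
    M.det.coeff (∑ i, r i + ∑ i, s i) = (M.weightedTopCoeff r s).det := by
  simp only [det_apply, finsetSum_coeff, coeff_smul]
  refine Finset.sum_congr rfl fun σ _ => ?_
  rw [← Equiv.sum_comp σ r, ← Finset.sum_add_distrib,
    coeff_prod_sum_of_natDegree_le _ _ _ fun i _ => h _ _]
  rfl

variable {m K : Type*} [Fintype m] [DecidableEq m] [Field K]

theorem det_fromBlocks_mul_diagonal_diagonal (A : Matrix m m K) (B : Matrix m n K)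
    (C : Matrix n m K) (q d : n → K) (hd : ∀ i, d i ≠ 0) :
    (fromBlocks A (B * diagonal q) C (diagonal d)).det =
      (∏ i, d i) * (A - B * diagonal (fun i => q i / d i) * C).det := by
  let : Invertible (diagonal d) := invertibleOfRightInverse _ (diagonal d⁻¹) <| by
    rw [diagonal_mul_diagonal, ← diagonal_one]
    exact congrArg diagonal (funext fun i => mul_inv_cancel₀ (hd i))
  rw [det_fromBlocks₂₂, det_diagonal]
  change _ * (A - B * diagonal q * diagonal d⁻¹ * C).det = _
  rw [Matrix.mul_assoc B, diagonal_mul_diagonal]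
  simp only [Pi.inv_apply, div_eq_mul_inv]

end Matrix

/-- `ρ ↦ p(ρ) (L(ρ) - B)` for the reduced logarithmic derivative
`L(ρ) = iρ - deg p + ρ p'(ρ) / p(ρ)` of the outgoing wave `e^{iρ} p(ρ) ρ^{-deg p}`. -/
noncomputable def outgoingLogDerivNumerator (p : ℂ[X]) (B : ℂ) : ℂ[X] :=
  (C Complex.I * X - C (p.natDegree + B)) * p + X * derivative p

theorem natDegree_outgoingLogDerivNumerator_le (p : ℂ[X]) (B : ℂ) :
    (outgoingLogDerivNumerator p B).natDegree ≤ p.natDegree + 1 := by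
  unfold outgoingLogDerivNumerator
  compute_degree
  omega

theorem eval_outgoingLogDerivNumerator_div {p : ℂ[X]} (B : ℂ) {ρ : ℂ} (hρ : p.eval ρ ≠ 0) :
    (outgoingLogDerivNumerator p B).eval ρ / p.eval ρ =
      Complex.I * ρ - p.natDegree + ρ * (derivative p).eval ρ / p.eval ρ - B := by
  simp only [outgoingLogDerivNumerator, eval_add, eval_mul, eval_sub, eval_C, eval_X]
  field_simp
  ring

section BorderedLevelMatrix

variable {ι κ R : Type*} [DecidableEq ι] [Fintype κ] [DecidableEq κ] [CommRing R]

noncomputable def borderedLevelMatrix (e : ι → R) (G : Matrix ι κ R) (q P : κ → R[X]) :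
    Matrix (ι ⊕ κ) (ι ⊕ κ) R[X] :=
  fromBlocks (diagonal fun i => C (e i) - X ^ 2) (G.map C * diagonal q) (G.map C)ᵀ (diagonal P)

variable (e : ι → R) (G : Matrix ι κ R) {q P : κ → R[X]} {ℓ : κ → ℕ}

theorem natDegree_borderedLevelMatrix_le (hq : ∀ c, (q c).natDegree ≤ ℓ c + 1)
    (hP : ∀ c, (P c).natDegree ≤ ℓ c) (i j : ι ⊕ κ) :
    (borderedLevelMatrix e G q P i j).natDegree ≤
      Sum.elim (fun _ => 2) (fun _ => 0) i + Sum.elim (fun _ => 0) ℓ j := by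
  rcases i with i | c <;> rcases j with j | d
  · rcases eq_or_ne i j with rfl | hij
    · simpa [borderedLevelMatrix] using natDegree_sub_le_of_le (natDegree_C _).le
        (natDegree_X_pow_le 2)
    · simp [borderedLevelMatrix, hij]
  · simpa [borderedLevelMatrix, mul_diagonal] using
      (natDegree_C_mul_le _ _).trans ((hq d).trans (by omega))
  · simp [borderedLevelMatrix]
  · rcases eq_or_ne c d with rfl | hcd
    · simpa [borderedLevelMatrix] using hP c
    · simp [borderedLevelMatrix, hcd]

theorem weightedTopCoeff_borderedLevelMatrix (hq : ∀ c, (q c).natDegree ≤ ℓ c + 1) :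
    (borderedLevelMatrix e G q P).weightedTopCoeff
        (Sum.elim (fun _ => 2) (fun _ => 0)) (Sum.elim (fun _ => 0) ℓ) =
      fromBlocks (-1) 0 Gᵀ (diagonal fun c => (P c).coeff (ℓ c)) := by
  ext (i | c) (j | d)
  · rcases eq_or_ne i j with rfl | hij
    · simp [weightedTopCoeff, borderedLevelMatrix]
    · simp [weightedTopCoeff, borderedLevelMatrix, hij]
  · have : (q d).coeff (2 + ℓ d) = 0 := coeff_eq_zero_of_natDegree_lt (by grind)
    simp [weightedTopCoeff, borderedLevelMatrix, mul_diagonal, this]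
  · simp [weightedTopCoeff, borderedLevelMatrix]
  · rcases eq_or_ne c d with rfl | hcd
    · simp [weightedTopCoeff, borderedLevelMatrix]
    · simp [weightedTopCoeff, borderedLevelMatrix, hcd]

variable [Fintype ι]

theorem natDegree_det_borderedLevelMatrix_le (hq : ∀ c, (q c).natDegree ≤ ℓ c + 1)
    (hP : ∀ c, (P c).natDegree ≤ ℓ c) :
    (borderedLevelMatrix e G q P).det.natDegree ≤ 2 * Fintype.card ι + ∑ c, ℓ c := by
  simpa [Fintype.sum_sum_type, mul_comm] using
    natDegree_det_le_of_natDegree_le_add (natDegree_borderedLevelMatrix_le e G hq hP)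

theorem coeff_det_borderedLevelMatrix (hq : ∀ c, (q c).natDegree ≤ ℓ c + 1)
    (hP : ∀ c, (P c).natDegree ≤ ℓ c) :
    (borderedLevelMatrix e G q P).det.coeff (2 * Fintype.card ι + ∑ c, ℓ c) =
      (-1) ^ Fintype.card ι * ∏ c, (P c).coeff (ℓ c) := by
  have h := coeff_det_of_natDegree_le_add (natDegree_borderedLevelMatrix_le e G hq hP)
  simp only [Fintype.sum_sum_type, Sum.elim_inl, Sum.elim_inr, Finset.sum_const_zero,
    Finset.sum_const, smul_eq_mul, Finset.card_univ, add_zero, zero_add] at h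
  rw [mul_comm, h, weightedTopCoeff_borderedLevelMatrix e G hq, det_fromBlocks_zero₁₂,
    det_diagonal, det_neg, det_one, mul_one]

theorem eval_det_borderedLevelMatrix {K : Type*} [Field K] (e : ι → K) (G : Matrix ι κ K)
    {q P : κ → K[X]} (z : K) (hz : ∀ c, (P c).eval z ≠ 0) :
    (borderedLevelMatrix e G q P).det.eval z = (∏ c, (P c).eval z) *
      (diagonal e - z ^ 2 • (1 : Matrix ι ι K) -
        G * diagonal (fun c => (q c).eval z / (P c).eval z) * Gᵀ).det := by
  have hmap : (borderedLevelMatrix e G q P).map (eval z) =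
      fromBlocks (diagonal e - z ^ 2 • 1) (G * diagonal fun c => (q c).eval z) Gᵀ
        (diagonal fun c => (P c).eval z) := by
    rw [borderedLevelMatrix, fromBlocks_map, ← coe_evalRingHom, Matrix.map_mul, ← transpose_map,
      Matrix.map_map, diagonal_map (map_zero _), diagonal_map (map_zero _), smul_one_eq_diagonal,
      diagonal_sub]
    simp [Function.comp_def]
  rw [← coe_evalRingHom, RingHom.map_det, RingHom.mapMatrix_apply, coe_evalRingHom, hmap,
    det_fromBlocks_mul_diagonal_diagonal _ _ _ _ _ hz]

end BorderedLevelMatrix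

/-- For R-matrix theory with `N` levels and `m` zero-threshold neutral
channels, the level determinant times the product of the outgoing-wavefunction polynomials
is a polynomial in the wavenumber `z` of degree exactly `2N + Σ_c ℓ_c`, with leading
coefficient `(−1)^N · ∏_c a_c^{ℓ_c}`: hence the radioactive problem has exactly
`2N + Σ_c ℓ_c` solutions in wavenumber space (with multiplicity). -/
theorem stmt0 (N m : ℕ) (e : Fin N → ℝ) (γ : Matrix (Fin N) (Fin m) ℝ)
    (B : Fin m → ℝ) (a : Fin m → ℝ) (ha : ∀ c, 0 < a c)
    (ℓ : Fin m → ℕ) (p : Fin m → Polynomial ℂ)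
    (hmonic : ∀ c, (p c).Monic) (hdeg : ∀ c, (p c).natDegree = ℓ c)
    (L : Fin m → ℂ → ℂ)
    (hL : ∀ c ρ, (p c).eval ρ ≠ 0 →
      L c ρ = Complex.I * ρ - (ℓ c : ℂ) + ρ * (Polynomial.derivative (p c)).eval ρ / (p c).eval ρ)
    (Ainv : ℂ → Matrix (Fin N) (Fin N) ℂ)
    (hAinv : ∀ z, Ainv z =
      Matrix.diagonal (fun lam => (e lam : ℂ)) - z ^ 2 • (1 : Matrix (Fin N) (Fin N) ℂ)
        - (γ.map ((↑) : ℝ → ℂ)) *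
            Matrix.diagonal (fun c => L c ((a c : ℂ) * z) - (B c : ℂ)) *
            (γ.map ((↑) : ℝ → ℂ))ᵀ) :
    ∃ Q : Polynomial ℂ,
      Q.degree = ((2 * N + ∑ c, ℓ c : ℕ) : WithBot ℕ) ∧
      Q.leadingCoeff = (-1 : ℂ) ^ N * ∏ c, (a c : ℂ) ^ ℓ c ∧
      ∀ z : ℂ, (∀ c, (p c).eval ((a c : ℂ) * z) ≠ 0) →
        (Ainv z).det * ∏ c, (p c).eval ((a c : ℂ) * z) = Q.eval z := by
  set P : Fin m → ℂ[X] := fun c => (p c).comp (C (a c : ℂ) * X)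
  set q : Fin m → ℂ[X] := fun c => (outgoingLogDerivNumerator (p c) (B c)).comp (C (a c : ℂ) * X)
  set G := γ.map ((↑) : ℝ → ℂ)
  set Q := (borderedLevelMatrix (fun i => (e i : ℂ)) G q P).det
  have hq : ∀ c, (q c).natDegree ≤ ℓ c + 1 := fun c =>
    (natDegree_comp_C_mul_X_le _ _).trans (hdeg c ▸ natDegree_outgoingLogDerivNumerator_le _ _)
  have hP : ∀ c, (P c).natDegree ≤ ℓ c := fun c => hdeg c ▸ natDegree_comp_C_mul_X_le _ _
  have hQcoeff : Q.coeff (2 * N + ∑ c, ℓ c) = (-1 : ℂ) ^ N * ∏ c, (a c : ℂ) ^ ℓ c := by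
    simpa [P, comp_C_mul_X_coeff, ← hdeg, (hmonic _).coeff_natDegree] using
      coeff_det_borderedLevelMatrix (fun i => (e i : ℂ)) G hq hP
  have hQcoeff_ne : Q.coeff (2 * N + ∑ c, ℓ c) ≠ 0 := by
    rw [hQcoeff]
    exact mul_ne_zero (by simp) (Finset.prod_ne_zero_iff.mpr fun c _ =>
      pow_ne_zero _ (Complex.ofReal_ne_zero.mpr (ha c).ne'))
  have hQdeg : Q.natDegree ≤ 2 * N + ∑ c, ℓ c := by
    simpa using natDegree_det_borderedLevelMatrix_le (fun i => (e i : ℂ)) G hq hP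
  refine ⟨Q, degree_eq_of_le_of_coeff_ne_zero (degree_le_of_natDegree_le hQdeg) hQcoeff_ne,
    ?_, fun z hz => ?_⟩
  · rw [leadingCoeff, natDegree_eq_of_le_of_coeff_ne_zero hQdeg hQcoeff_ne, hQcoeff]
  · have hP_eval : ∀ c, (P c).eval z = (p c).eval ((a c : ℂ) * z) := by simp [P, eval_comp]
    have hq_div : ∀ c, (q c).eval z / (P c).eval z = L c ((a c : ℂ) * z) - B c := fun c => by
      rw [hP_eval, eval_comp, eval_mul, eval_C, eval_X, eval_outgoingLogDerivNumerator_div _ (hz c),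
        hL c _ (hz c), hdeg]
    rw [eval_det_borderedLevelMatrix _ _ z fun c => hP_eval c ▸ hz c, hAinv, mul_comm]
    simp only [hq_div, ← hP_eval]
end

section
/- For every a ∈ J, the derivative of the scattering function with respect to the channel radius satisfies U'(a) = (2ik/O(ka)²) · ( a·R_L'(a) + (1 − 2·L(ka))·R_L(a) − 1 ). In particular, U is constant on J (invariance of the scattering matrix under change of channel radius) if and only if the Kapur–Peierls function satisfies the differential equation a·R_L'(a) + (1 − 2·L(ka))·R_L(a) − 1 = 0 on J. -/
/-!
By the Wronskian, `d/da (I(ka)/O(ka)) = -2ik/O(ka)²`, so every term of `U'` carries the factor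
`2ik/O(ka)²`, which never vanishes; since `J` is an interval, `U` is constant on it exactly when
`U'` vanishes there.
-/

open Topology

theorem IsOpen.is_const_iff_deriv_eq_zero {𝕜 G : Type*} [RCLike 𝕜] [NormedAddCommGroup G]
    [NormedSpace 𝕜 G] {f : 𝕜 → G} {s : Set 𝕜} (hs : IsOpen s) (hs' : IsPreconnected s)
    (hf : DifferentiableOn 𝕜 f s) :
    (∀ x ∈ s, ∀ y ∈ s, f x = f y) ↔ ∀ x ∈ s, deriv f x = 0 := by
  refine ⟨fun hconst x hx => ?_, fun h0 x hx y hy => hs.is_const_of_deriv_eq_zero hs' hf h0 hx hy⟩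
  have hloc : f =ᶠ[𝓝 x] fun _ => f x :=
    Filter.eventuallyEq_of_mem (hs.mem_nhds hx) fun y hy => hconst y hy x hx
  rw [hloc.deriv_eq, deriv_const]

theorem HasDerivAt.comp_const_mul_ofReal {F : ℂ → ℂ} {F' k : ℂ} {a : ℝ}
    (hF : HasDerivAt F F' (k * a)) : HasDerivAt (fun b : ℝ => F (k * b)) (F' * k) a := by
  have hmul : HasDerivAt (fun z : ℂ => k * z) k a := by
    simpa using (hasDerivAt_id (a : ℂ)).const_mul k
  exact (hF.comp _ hmul).comp_ofReal

noncomputable def scatteringFunction (k : ℂ) (O I : ℂ → ℂ) (R : ℝ → ℂ) (a : ℝ) : ℂ :=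
  I (k * a) / O (k * a) + 2 * Complex.I * (k * a) * R a / O (k * a) ^ 2

theorem hasDerivAt_scatteringFunction {k : ℂ} {O I : ℂ → ℂ} {R : ℝ → ℂ} {a : ℝ}
    (hO : DifferentiableAt ℂ O (k * a)) (hI : DifferentiableAt ℂ I (k * a))
    (hR : DifferentiableAt ℝ R a) (hOa : O (k * a) ≠ 0)
    (hW : deriv O (k * a) * I (k * a) - deriv I (k * a) * O (k * a) = 2 * Complex.I) :
    HasDerivAt (scatteringFunction k O I R)
      (2 * Complex.I * k / O (k * a) ^ 2 *
        (a * deriv R a + (1 - 2 * (k * a * deriv O (k * a) / O (k * a))) * R a - 1)) a := by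
  have hOk := hO.hasDerivAt.comp_const_mul_ofReal
  have hIk := hI.hasDerivAt.comp_const_mul_ofReal
  have hka : HasDerivAt (fun b : ℝ => k * (b : ℂ)) k a := by
    simpa using ((hasDerivAt_id (a : ℂ)).comp_ofReal).const_mul k
  have hnum := (hka.const_mul (2 * Complex.I)).mul hR.hasDerivAt
  have hquot := (hIk.div hOk hOa).add (hnum.div (hOk.pow 2) (pow_ne_zero 2 hOa))
  refine hquot.congr_deriv ?_
  simp only [Pi.pow_apply, Pi.mul_apply]
  field_simp
  linear_combination -k * O (k * a) ^ 2 * hW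

theorem stmt1_general (k : ℂ) (hk : k ≠ 0) (O Iw : ℂ → ℂ)
    (hO : Differentiable ℂ O) (hIw : Differentiable ℂ Iw)
    (L : ℂ → ℂ) (hL : ∀ ρ, O ρ ≠ 0 → L ρ = ρ * deriv O ρ / O ρ)
    (J : Set ℝ) (hJo : IsOpen J) (hJc : J.OrdConnected)
    (hWr : ∀ a ∈ J, deriv O (k * (a : ℂ)) * Iw (k * (a : ℂ))
      - deriv Iw (k * (a : ℂ)) * O (k * (a : ℂ)) = 2 * Complex.I)
    (hOne : ∀ a ∈ J, O (k * (a : ℂ)) ≠ 0)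
    (RL : ℝ → ℂ) (hRL : ∀ a ∈ J, DifferentiableAt ℝ RL a)
    (U : ℝ → ℂ)
    (hU : ∀ a : ℝ, U a = Iw (k * (a : ℂ)) / O (k * (a : ℂ))
      + 2 * Complex.I * (k * (a : ℂ)) * RL a / (O (k * (a : ℂ))) ^ 2) :
    (∀ a ∈ J, deriv U a =
        2 * Complex.I * k / (O (k * (a : ℂ))) ^ 2 *
          ((a : ℂ) * deriv RL a + (1 - 2 * L (k * (a : ℂ))) * RL a - 1)) ∧
    ((∀ a ∈ J, ∀ b ∈ J, U a = U b) ↔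
      ∀ a ∈ J, (a : ℂ) * deriv RL a + (1 - 2 * L (k * (a : ℂ))) * RL a - 1 = 0) := by
  have hderiv : ∀ a ∈ J, HasDerivAt U (2 * Complex.I * k / (O (k * (a : ℂ))) ^ 2 *
      ((a : ℂ) * deriv RL a + (1 - 2 * L (k * (a : ℂ))) * RL a - 1)) a := by
    intro a ha
    rw [show U = scatteringFunction k O Iw RL from funext hU, hL _ (hOne a ha)]
    exact hasDerivAt_scatteringFunction (hO _) (hIw _) (hRL a ha) (hOne a ha) (hWr a ha)
  refine ⟨fun a ha => (hderiv a ha).deriv, ?_⟩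
  rw [hJo.is_const_iff_deriv_eq_zero hJc.isPreconnected
    fun a ha => (hderiv a ha).differentiableAt.differentiableWithinAt]
  refine forall₂_congr fun a ha => ?_
  have hfactor : 2 * Complex.I * k / O (k * (a : ℂ)) ^ 2 ≠ 0 := by
    simp [hk, hOne a ha, Complex.I_ne_zero]
  rw [(hderiv a ha).deriv, mul_eq_zero, or_iff_right hfactor]

/-- Single-channel R-matrix scattering: the derivative of the scattering
function with respect to the channel radius is
`U'(a) = (2ik/O(ka)²)·(a·R_L'(a) + (1 − 2L(ka))·R_L(a) − 1)`; in particular `U` is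
constant on `J` iff the Kapur–Peierls function satisfies
`a·R_L'(a) + (1 − 2L(ka))·R_L(a) − 1 = 0` on `J`. -/
theorem stmt1 (k : ℂ) (hk : k ≠ 0) (O Iw : ℂ → ℂ)
    (hO : Differentiable ℂ O) (hIw : Differentiable ℂ Iw)
    (L : ℂ → ℂ) (hL : ∀ ρ, O ρ ≠ 0 → L ρ = ρ * deriv O ρ / O ρ)
    (J : Set ℝ) (hJo : IsOpen J) (hJc : J.OrdConnected) (hJpos : J ⊆ Set.Ioi 0)
    (hWr : ∀ a ∈ J, deriv O (k * (a : ℂ)) * Iw (k * (a : ℂ))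
      - deriv Iw (k * (a : ℂ)) * O (k * (a : ℂ)) = 2 * Complex.I)
    (hOne : ∀ a ∈ J, O (k * (a : ℂ)) ≠ 0)
    (RL : ℝ → ℂ) (hRL : ∀ a ∈ J, DifferentiableAt ℝ RL a)
    (U : ℝ → ℂ)
    (hU : ∀ a : ℝ, U a = Iw (k * (a : ℂ)) / O (k * (a : ℂ))
      + 2 * Complex.I * (k * (a : ℂ)) * RL a / (O (k * (a : ℂ))) ^ 2) :
    (∀ a ∈ J, deriv U a =
        2 * Complex.I * k / (O (k * (a : ℂ))) ^ 2 *
          ((a : ℂ) * deriv RL a + (1 - 2 * L (k * (a : ℂ))) * RL a - 1)) ∧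
    ((∀ a ∈ J, ∀ b ∈ J, U a = U b) ↔
      ∀ a ∈ J, (a : ℂ) * deriv RL a + (1 - 2 * L (k * (a : ℂ))) * RL a - 1 = 0) :=
  stmt1_general k hk O Iw hO hIw L hL J hJo hJc hWr hOne RL hRL U hU
end

section
/- If r satisfies the differential equation a·r'(a) + (1/2 − L(ka))·r(a) = 0 for every a ∈ J, then the radioactive width transforms under a change of channel radius a₀ → a according to r(a)·O(k·a₀)·√a = r(a₀)·O(k·a)·√a₀ for every a ∈ J; equivalently r(a) = r(a₀)·√(a₀/a)·O(ka)/O(ka₀). -/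
/-! The equation says that `r` has logarithmic derivative `-(1/2 - L(ka))/a`, while
`a ↦ √a / O(ka)` has logarithmic derivative `(1/2 - L(ka))/a`. Hence `r(a)·√a / O(ka)` has zero
derivative on `J`, and is therefore constant on the interval `J`. -/

theorem Set.OrdConnected.apply_eq_of_hasDerivAt_zero {E : Type*} [NormedAddCommGroup E]
    [NormedSpace ℝ E] {f : ℝ → E} {s : Set ℝ} (hs : s.OrdConnected)
    (hf : ∀ x ∈ s, HasDerivAt f 0 x) {x y : ℝ} (hx : x ∈ s) (hy : y ∈ s) : f x = f y := by
  have h := (convex_iff_ordConnected.2 hs).norm_image_sub_le_of_norm_hasDerivWithin_le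
    (fun z hz => (hf z hz).hasDerivWithinAt) (fun _ _ => norm_zero.le) hx hy
  rw [zero_mul, norm_le_zero_iff, sub_eq_zero] at h
  exact h.symm

theorem hasDerivAt_mul_integratingFactor {r G : ℝ → ℂ} {r' c : ℂ} {a : ℝ} (ha : a ≠ 0)
    (hr : HasDerivAt r r' a) (hG : HasDerivAt G (c / a * G a) a)
    (hode : (a : ℂ) * r' + c * r a = 0) : HasDerivAt (fun t => r t * G t) 0 a := by
  have ha' : (a : ℂ) ≠ 0 := Complex.ofReal_ne_zero.2 ha
  refine (hr.mul hG).congr_deriv ?_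
  field_simp
  linear_combination G a * hode

theorem hasDerivAt_sqrt_div_comp_mul {O : ℂ → ℂ} {k : ℂ} {a : ℝ} (ha : 0 < a)
    (hO : DifferentiableAt ℂ O (k * a)) (hOa : O (k * a) ≠ 0) :
    HasDerivAt (fun t : ℝ => (Real.sqrt t : ℂ) / O (k * t))
      ((1 / 2 - k * a * deriv O (k * a) / O (k * a)) / a * ((Real.sqrt a : ℂ) / O (k * a))) a := by
  have hsqrt : HasDerivAt (fun t : ℝ => (Real.sqrt t : ℂ)) ((1 / (2 * Real.sqrt a) : ℝ) : ℂ) a :=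
    (Real.hasDerivAt_sqrt ha.ne').ofReal_comp
  have hOk : HasDerivAt (fun t : ℝ => O (k * t)) (deriv O (k * a) * k) a := by
    simpa using (hO.hasDerivAt.comp (a : ℂ) ((hasDerivAt_id (a : ℂ)).const_mul k)).comp_ofReal
  have hsq : (Real.sqrt a : ℂ) * Real.sqrt a = a := by
    rw [← Complex.ofReal_mul, Real.mul_self_sqrt ha.le]
  have hs0 : (Real.sqrt a : ℂ) ≠ 0 := Complex.ofReal_ne_zero.2 (Real.sqrt_pos.2 ha).ne'
  have ha0 : (a : ℂ) ≠ 0 := Complex.ofReal_ne_zero.2 ha.ne'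
  refine (hsqrt.div hOk hOa).congr_deriv ?_
  push_cast
  field_simp
  linear_combination -O (k * a) * hsq

/-- If the radioactive width `r` satisfies the differential equation
`a·r'(a) + (1/2 − L(ka))·r(a) = 0` on the interval `J` of channel radii, then it
transforms under a change of channel radius `a₀ → a` according to
`r(a)·O(k·a₀)·√a = r(a₀)·O(k·a)·√a₀`, i.e. `r(a) = r(a₀)·√(a₀/a)·O(ka)/O(ka₀)`. -/
theorem stmt2 (k : ℂ) (O : ℂ → ℂ) (hO : Differentiable ℂ O)
    (L : ℂ → ℂ) (hL : ∀ ρ, O ρ ≠ 0 → L ρ = ρ * deriv O ρ / O ρ)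
    (J : Set ℝ) (hJc : J.OrdConnected) (hJpos : J ⊆ Set.Ioi 0)
    (a₀ : ℝ) (ha₀ : a₀ ∈ J)
    (hOne : ∀ a ∈ J, O (k * (a : ℂ)) ≠ 0)
    (r : ℝ → ℂ) (hr : ∀ a ∈ J, DifferentiableAt ℝ r a)
    (hode : ∀ a ∈ J, (a : ℂ) * deriv r a + (1 / 2 - L (k * (a : ℂ))) * r a = 0) :
    ∀ a ∈ J, r a * O (k * (a₀ : ℂ)) * (Real.sqrt a : ℂ) =
      r a₀ * O (k * (a : ℂ)) * (Real.sqrt a₀ : ℂ) := by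
  intro a ha
  have hderiv : ∀ t ∈ J, HasDerivAt (fun t : ℝ => r t * ((Real.sqrt t : ℂ) / O (k * t))) 0 t :=
    fun t ht => hasDerivAt_mul_integratingFactor (hJpos ht).ne' (hr t ht).hasDerivAt
      (hasDerivAt_sqrt_div_comp_mul (hJpos ht) (hO _) (hOne t ht))
      (hL _ (hOne t ht) ▸ hode t ht)
  have h := hJc.apply_eq_of_hasDerivAt_zero hderiv ha ha₀
  have hOa := hOne a ha
  have hOa₀ := hOne a₀ ha₀
  field_simp at h
  linear_combination h
end

section
/- If r satisfies a·r'(a) + (1/2 − L(ka))·r(a) = 0 for every a ∈ J, then for every a ∈ J the radioactive width transforms by the elemental product expansion: r(a)·√a·a^ℓ·e^{−ika}·∏_{n=1}^{ℓ}(k·a₀ − ω_n) = r(a₀)·√a₀·a₀^ℓ·e^{−ik·a₀}·∏_{n=1}^{ℓ}(k·a − ω_n); equivalently r(a)/r(a₀) = √(a₀/a)·(a₀/a)^ℓ·e^{ik(a−a₀)}·∏_{n=1}^{ℓ} (ka − ω_n)/(ka₀ − ω_n). -/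
/-!
Because `L(ρ) = ρ O'(ρ) / O(ρ)`, the function `g(a) = √a / O(ka)` satisfies
`a g'(a) = (1/2 - L(ka)) g(a)`, while the radial equation says `a r'(a) = -(1/2 - L(ka)) r(a)`.
Hence `r · g` has zero derivative and is constant on the interval `J`. Unfolding
`1 / O(ka) = (ka)^ℓ e^{-ika} / ∏ (ka - ω_n)` and cancelling `k^ℓ` gives the product expansion.
-/

theorem Set.OrdConnected.eq_of_hasDerivAt_eq_zero {E : Type*} [NormedAddCommGroup E]
    [NormedSpace ℝ E] {J : Set ℝ} (hJ : J.OrdConnected) {f : ℝ → E}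
    (hf : ∀ x ∈ J, HasDerivAt f 0 x) {a b : ℝ} (ha : a ∈ J) (hb : b ∈ J) : f a = f b := by
  have h := hJ.convex.norm_image_sub_le_of_norm_hasDerivWithin_le
    (fun x hx => (hf x hx).hasDerivWithinAt) (fun _ _ => norm_zero.le) hb ha
  rwa [zero_mul, norm_le_zero_iff, sub_eq_zero] at h

theorem hasDerivAt_ofReal_sqrt_div_comp_mul {O : ℂ → ℂ} {k : ℂ} {x : ℝ} (hx : x ≠ 0)
    (hO : DifferentiableAt ℂ O (k * x)) (hOx : O (k * x) ≠ 0) :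
    HasDerivAt (fun y : ℝ => (√y : ℂ) / O (k * y))
      ((1 / 2 - k * x * deriv O (k * x) / O (k * x)) / x * ((√x : ℂ) / O (k * x))) x := by
  have hsqrt := (Real.hasDerivAt_sqrt hx).ofReal_comp
  have hOk : HasDerivAt (fun y : ℝ => O (k * y)) (deriv O (k * x) * k) x := by
    simpa using (hO.hasDerivAt.comp _ ((hasDerivAt_id _).const_mul k)).comp_ofReal
  refine (hsqrt.fun_div hOk hOx).congr_deriv ?_
  -- `√x / x = 1 / √x` holds for every real `x`, thanks to `√x = 0` for `x < 0`.
  have hsqrt_div : 1 / (2 * √x) = √x / x / 2 := by rw [Real.sqrt_div_self']; ring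
  have hxC : (x : ℂ) ≠ 0 := by exact_mod_cast hx
  rw [hsqrt_div]
  push_cast
  generalize O (k * x) = c at hOx ⊢
  field_simp

theorem hasDerivAt_mul_ofReal_sqrt_div_comp_mul_zero {O : ℂ → ℂ} {k : ℂ} {r : ℝ → ℂ}
    {x : ℝ} (hx : x ≠ 0) (hO : DifferentiableAt ℂ O (k * x)) (hOx : O (k * x) ≠ 0)
    (hr : DifferentiableAt ℝ r x)
    (hode : x * deriv r x + (1 / 2 - k * x * deriv O (k * x) / O (k * x)) * r x = 0) :
    HasDerivAt (fun y : ℝ => r y * ((√y : ℂ) / O (k * y))) 0 x := by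
  refine (hr.hasDerivAt.mul (hasDerivAt_ofReal_sqrt_div_comp_mul hx hO hOx)).congr_deriv ?_
  have hxC : (x : ℂ) ≠ 0 := by exact_mod_cast hx
  generalize O (k * x) = c, deriv O (k * x) = d at hOx hode ⊢
  field_simp at hode ⊢
  linear_combination (√x : ℂ) * hode

theorem stmt3_general (ℓ : ℕ) (ω : Fin ℓ → ℂ) (k : ℂ) (O : ℂ → ℂ)
    (hO : ∀ ρ : ℂ, O ρ = Complex.exp (Complex.I * ρ) * (∏ n, (ρ - ω n)) / ρ ^ ℓ)
    (L : ℂ → ℂ) (hL : ∀ ρ, O ρ ≠ 0 → L ρ = ρ * deriv O ρ / O ρ)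
    (J : Set ℝ) (hJc : J.OrdConnected)
    (a₀ : ℝ) (ha₀ : a₀ ∈ J)
    (hne : ∀ a ∈ J, k * (a : ℂ) ≠ 0 ∧ ∀ n, k * (a : ℂ) ≠ ω n)
    (r : ℝ → ℂ) (hr : ∀ a ∈ J, DifferentiableAt ℝ r a)
    (hode : ∀ a ∈ J, (a : ℂ) * deriv r a + (1 / 2 - L (k * (a : ℂ))) * r a = 0) :
    ∀ a ∈ J,
      r a * (Real.sqrt a : ℂ) * (a : ℂ) ^ ℓ * Complex.exp (-(Complex.I * k * (a : ℂ))) *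
          ∏ n, (k * (a₀ : ℂ) - ω n) =
        r a₀ * (Real.sqrt a₀ : ℂ) * (a₀ : ℂ) ^ ℓ * Complex.exp (-(Complex.I * k * (a₀ : ℂ))) *
          ∏ n, (k * (a : ℂ) - ω n) := by
  intro a ha
  have hk : k ≠ 0 := left_ne_zero_of_mul (hne a₀ ha₀).1
  have hprod : ∀ y ∈ J, ∏ n, (k * (y : ℂ) - ω n) ≠ 0 := fun y hy =>
    Finset.prod_ne_zero_iff.2 fun n _ => sub_ne_zero.2 ((hne y hy).2 n)
  have hO_ne : ∀ y ∈ J, O (k * y) ≠ 0 := fun y hy => by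
    rw [hO]
    exact div_ne_zero (mul_ne_zero (Complex.exp_ne_zero _) (hprod y hy))
      (pow_ne_zero _ (hne y hy).1)
  have hO_diff : ∀ y ∈ J, DifferentiableAt ℂ O (k * y) := fun y hy => by
    rw [funext hO]
    exact DifferentiableAt.div (by fun_prop) (by fun_prop) (pow_ne_zero _ (hne y hy).1)
  have hzero : ∀ x ∈ J, HasDerivAt (fun y : ℝ => r y * ((√y : ℂ) / O (k * y))) 0 x :=
    fun x hx => hasDerivAt_mul_ofReal_sqrt_div_comp_mul_zero
      (by exact_mod_cast right_ne_zero_of_mul (hne x hx).1) (hO_diff x hx) (hO_ne x hx)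
      (hr x hx) (hL _ (hO_ne x hx) ▸ hode x hx)
  have hconst := hJc.eq_of_hasDerivAt_eq_zero hzero ha ha₀
  have hPa := hprod a ha
  have hPa₀ := hprod a₀ ha₀
  simp only [hO, Complex.exp_neg] at hconst ⊢
  field_simp at hconst ⊢
  rw [mul_pow, mul_pow] at hconst
  apply mul_right_cancel₀ (pow_ne_zero ℓ hk)
  linear_combination hconst

/-- Neutral-particle channel of angular momentum `ℓ`, with outgoing
wavefunction `O(ρ) = e^{iρ}·∏_{n}(ρ − ω_n)·ρ^{−ℓ}`. If the radioactive width `r`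
satisfies `a·r'(a) + (1/2 − L(ka))·r(a) = 0` on `J`, then it transforms under a change
of channel radius by the elemental product expansion
`r(a)/r(a₀) = √(a₀/a)·(a₀/a)^ℓ·e^{ik(a−a₀)}·∏_n (ka − ω_n)/(ka₀ − ω_n)`. -/
theorem stmt3 (ℓ : ℕ) (ω : Fin ℓ → ℂ) (k : ℂ) (O : ℂ → ℂ)
    (hO : ∀ ρ : ℂ, O ρ = Complex.exp (Complex.I * ρ) * (∏ n, (ρ - ω n)) / ρ ^ ℓ)
    (L : ℂ → ℂ) (hL : ∀ ρ, O ρ ≠ 0 → L ρ = ρ * deriv O ρ / O ρ)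
    (J : Set ℝ) (hJc : J.OrdConnected) (hJpos : J ⊆ Set.Ioi 0)
    (a₀ : ℝ) (ha₀ : a₀ ∈ J)
    (hne : ∀ a ∈ J, k * (a : ℂ) ≠ 0 ∧ ∀ n, k * (a : ℂ) ≠ ω n)
    (r : ℝ → ℂ) (hr : ∀ a ∈ J, DifferentiableAt ℝ r a)
    (hode : ∀ a ∈ J, (a : ℂ) * deriv r a + (1 / 2 - L (k * (a : ℂ))) * r a = 0) :
    ∀ a ∈ J,
      r a * (Real.sqrt a : ℂ) * (a : ℂ) ^ ℓ * Complex.exp (-(Complex.I * k * (a : ℂ))) *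
          ∏ n, (k * (a₀ : ℂ) - ω n) =
        r a₀ * (Real.sqrt a₀ : ℂ) * (a₀ : ℂ) ^ ℓ * Complex.exp (-(Complex.I * k * (a₀ : ℂ))) *
          ∏ n, (k * (a : ℂ) - ω n) :=
  stmt3_general ℓ ω k O hO L hL J hJc a₀ ha₀ hne r hr hode
end

section
/- (Scattering matrix poles are the radioactive poles.) If M(ω) is invertible (ω is not a pole of the Kapur–Peierls operator), then the scattering matrix extends holomorphically across ω even when O_c(a_c·ω) = 0 for some channels c: there exist an open neighborhood N ⊆ V of ω and a holomorphic W : N → Matrix (Fin n) (Fin n) ℂ such that W(z) = 𝑈(z) for every z ∈ N with O_c(a_c·z) ≠ 0 for all c. In particular, the roots of the outgoing wavefunctions are removable singularities (not poles) of the analytically continued scattering matrix. -/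
/-!
Write `𝒪, ℐ` for the diagonal matrices of outgoing and incoming waves, `ρ = a z`, and `M_I` for
`M` with `I` in place of `O`. Since `1 - R (𝐿 - B) = R M 𝒪⁻¹`, the Kapur–Peierls operator is
`R_L = 𝒪 M⁻¹`, and the Wronskian gives `M_I = M 𝒪⁻¹ ℐ + 2i ρ 𝒪⁻¹`. Substituting both into `U`
and using `q² = ρ` yields `U = diag q · M⁻¹ · M_I · diag q⁻¹`, in which `𝒪⁻¹` no longer occurs:
the right-hand side is holomorphic wherever `M` is invertible and `z ≠ 0`, an open neighbourhood
of `ω`.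
-/

open Matrix

section EntrywiseDifferentiable

variable {𝕜 : Type*} [NontriviallyNormedField 𝕜] {l m p : Type*} {s t : Set 𝕜}

def EntrywiseDifferentiableOn (A : 𝕜 → Matrix l p 𝕜) (s : Set 𝕜) : Prop :=
  ∀ i j, DifferentiableOn 𝕜 (fun z => A z i j) s

theorem EntrywiseDifferentiableOn.mono {A : 𝕜 → Matrix l p 𝕜}
    (hA : EntrywiseDifferentiableOn A t) (hst : s ⊆ t) : EntrywiseDifferentiableOn A s :=
  fun i j => (hA i j).mono hst

theorem entrywiseDifferentiableOn_const (A : Matrix l p 𝕜) :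
    EntrywiseDifferentiableOn (fun _ : 𝕜 => A) s :=
  fun _ _ => differentiableOn_const _

theorem entrywiseDifferentiableOn_diagonal [DecidableEq m] {v : m → 𝕜 → 𝕜}
    (hv : ∀ c, DifferentiableOn 𝕜 (v c) s) :
    EntrywiseDifferentiableOn (fun z => diagonal fun c => v c z) s := by
  intro i j
  by_cases h : i = j
  · subst h
    simpa using hv i
  · simp [diagonal_apply_ne _ h, differentiableOn_const]

theorem EntrywiseDifferentiableOn.add {A B : 𝕜 → Matrix l p 𝕜}
    (hA : EntrywiseDifferentiableOn A s) (hB : EntrywiseDifferentiableOn B s) :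
    EntrywiseDifferentiableOn (fun z => A z + B z) s :=
  fun i j => (hA i j).add (hB i j)

theorem EntrywiseDifferentiableOn.sub {A B : 𝕜 → Matrix l p 𝕜}
    (hA : EntrywiseDifferentiableOn A s) (hB : EntrywiseDifferentiableOn B s) :
    EntrywiseDifferentiableOn (fun z => A z - B z) s :=
  fun i j => (hA i j).sub (hB i j)

theorem EntrywiseDifferentiableOn.mul [Fintype m] {A : 𝕜 → Matrix l m 𝕜} {B : 𝕜 → Matrix m p 𝕜}
    (hA : EntrywiseDifferentiableOn A s) (hB : EntrywiseDifferentiableOn B s) :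
    EntrywiseDifferentiableOn (fun z => A z * B z) s := by
  intro i j
  simp only [mul_apply]
  exact DifferentiableOn.fun_sum fun k _ => (hA i k).mul (hB k j)

theorem EntrywiseDifferentiableOn.det [Fintype m] [DecidableEq m] {A : 𝕜 → Matrix m m 𝕜}
    (hA : EntrywiseDifferentiableOn A s) : DifferentiableOn 𝕜 (fun z => (A z).det) s := by
  simp only [det_apply']
  exact DifferentiableOn.fun_sum fun σ _ =>
    (DifferentiableOn.fun_finsetProd fun i _ => hA (σ i) i).const_mul _

theorem EntrywiseDifferentiableOn.inv [Fintype m] [DecidableEq m] {A : 𝕜 → Matrix m m 𝕜}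
    (hA : EntrywiseDifferentiableOn A s) (hdet : ∀ z ∈ s, (A z).det ≠ 0) :
    EntrywiseDifferentiableOn (fun z => (A z)⁻¹) s := by
  intro i j
  have hadj : DifferentiableOn 𝕜 (fun z => (A z).adjugate i j) s := by
    simp only [adjugate_apply]
    refine EntrywiseDifferentiableOn.det fun k l => ?_
    by_cases h : k = j
    · simp [updateRow_apply, h, differentiableOn_const]
    · simpa [updateRow_apply, h] using hA k l
  refine ((hA.det.fun_inv hdet).fun_mul hadj).congr fun z _ => ?_
  change (A z)⁻¹ i j = _
  rw [Matrix.inv_def, Matrix.smul_apply, Ring.inverse_eq_inv, smul_eq_mul]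

end EntrywiseDifferentiable

section ScatteringAlgebra

variable {K m : Type*} [Field K] [Fintype m] [DecidableEq m]

theorem diagonal_inv_mul_diagonal {v : m → K} (hv : ∀ c, v c ≠ 0) :
    (diagonal fun c => (v c)⁻¹) * diagonal v = 1 := by
  rw [diagonal_mul_diagonal, ← diagonal_one]
  exact congrArg diagonal (funext fun c => inv_mul_cancel₀ (hv c))

theorem inv_diagonal_of_ne_zero {v : m → K} (hv : ∀ c, v c ≠ 0) :
    (diagonal v)⁻¹ = diagonal fun c => (v c)⁻¹ :=
  inv_eq_left_inv (diagonal_inv_mul_diagonal hv)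

theorem kapurPeierls_eq {R D : Matrix m m K} {O L : m → K} (hR : IsUnit R.det)
    (hO : ∀ c, O c ≠ 0) :
    (1 - R * (diagonal (fun c => L c / O c) - D))⁻¹ * R =
      diagonal O * ((R⁻¹ + D) * diagonal O - diagonal L)⁻¹ := by
  have hOdet : IsUnit (diagonal O).det := by
    simpa [det_diagonal, Finset.prod_ne_zero_iff] using hO
  have factor : 1 - R * (diagonal (fun c => L c / O c) - D) =
      R * ((R⁻¹ + D) * diagonal O - diagonal L) * (diagonal O)⁻¹ := by
    have hLO : diagonal L * (diagonal O)⁻¹ = diagonal fun c => L c / O c := by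
      simp only [inv_diagonal_of_ne_zero hO, diagonal_mul_diagonal, div_eq_mul_inv]
    symm
    calc R * ((R⁻¹ + D) * diagonal O - diagonal L) * (diagonal O)⁻¹
        = R * R⁻¹ * (diagonal O * (diagonal O)⁻¹) + R * D * (diagonal O * (diagonal O)⁻¹)
          - R * (diagonal L * (diagonal O)⁻¹) := by noncomm_ring
      _ = _ := by
        rw [mul_nonsing_inv _ hR, mul_nonsing_inv _ hOdet, hLO]
        noncomm_ring
  rw [factor, Matrix.mul_inv_rev, Matrix.mul_inv_rev, nonsing_inv_nonsing_inv _ hOdet,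
    Matrix.mul_assoc, Matrix.mul_assoc, nonsing_inv_mul _ hR, Matrix.mul_one]

theorem mul_diagonal_sub_diagonal_eq_of_wronskian (A : Matrix m m K) {O I O' I' ρ : m → K}
    {w : K} (hO : ∀ c, O c ≠ 0) (hW : ∀ c, O' c * I c - I' c * O c = w) :
    A * diagonal I - diagonal (fun c => ρ c * I' c) =
      (A * diagonal O - diagonal fun c => ρ c * O' c) * diagonal (fun c => I c / O c) +
        w • diagonal fun c => ρ c / O c := by
  have hOI : (diagonal O * diagonal fun c => I c / O c) = diagonal I := by
    rw [diagonal_mul_diagonal]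
    exact congrArg diagonal (funext fun c => mul_div_cancel₀ _ (hO c))
  rw [Matrix.sub_mul, Matrix.mul_assoc, hOI, diagonal_mul_diagonal, ← diagonal_smul, sub_add,
    diagonal_sub]
  congr 2
  funext c
  simp only [Pi.smul_apply, smul_eq_mul]
  field_simp [hO c]
  linear_combination -ρ c * hW c

theorem scatteringMatrix_eq {R D : Matrix m m K} {O I O' I' ρ q : m → K} {w : K}
    (hR : IsUnit R.det) (hM : IsUnit ((R⁻¹ + D) * diagonal O - diagonal fun c => ρ c * O' c).det)
    (hO : ∀ c, O c ≠ 0) (hq : ∀ c, q c ≠ 0) (hq2 : ∀ c, q c ^ 2 = ρ c)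
    (hW : ∀ c, O' c * I c - I' c * O c = w) :
    (diagonal O)⁻¹ * diagonal I + w • (diagonal q * (diagonal O)⁻¹ *
        ((1 - R * (diagonal (fun c => ρ c * O' c / O c) - D))⁻¹ * R) * (diagonal O)⁻¹ *
        diagonal q) =
      diagonal q * ((R⁻¹ + D) * diagonal O - diagonal fun c => ρ c * O' c)⁻¹ *
        ((R⁻¹ + D) * diagonal I - diagonal fun c => ρ c * I' c) * diagonal fun c => (q c)⁻¹ := by
  rw [kapurPeierls_eq hR hO, mul_diagonal_sub_diagonal_eq_of_wronskian _ hO hW]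
  set M := (R⁻¹ + D) * diagonal O - diagonal fun c => ρ c * O' c
  have hI : diagonal q * ((diagonal fun c => I c / O c) * diagonal fun c => (q c)⁻¹) =
      (diagonal fun c => (O c)⁻¹) * diagonal I := by
    simp only [diagonal_mul_diagonal]
    congr 1
    funext c
    field_simp [hq c]
  have hρ : (diagonal fun c => ρ c / O c) * (diagonal fun c => (q c)⁻¹) =
      (diagonal fun c => (O c)⁻¹) * diagonal q := by
    simp only [diagonal_mul_diagonal]
    congr 1
    funext c
    field_simp [hq c, hO c]
    exact (hq2 c).symm
  rw [inv_diagonal_of_ne_zero hO]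
  simp only [Matrix.mul_add, Matrix.add_mul, Matrix.mul_smul, Matrix.smul_mul, Matrix.mul_assoc]
  rw [hρ, ← Matrix.mul_assoc M⁻¹ M, nonsing_inv_mul _ hM, Matrix.one_mul, hI,
    ← Matrix.mul_assoc (diagonal fun c => (O c)⁻¹) (diagonal O), diagonal_inv_mul_diagonal hO,
    Matrix.one_mul]

end ScatteringAlgebra

/-- `M(z)` is `matchingMatrix R (diagonal B) a O z`; with the incoming waves `I` in place of `O`
it becomes the numerator of the scattering matrix. -/
noncomputable def matchingMatrix {m : Type*} [Fintype m] [DecidableEq m] (R : ℂ → Matrix m m ℂ)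
    (D : Matrix m m ℂ) (a : m → ℂ) (f : m → ℂ → ℂ) (z : ℂ) : Matrix m m ℂ :=
  ((R z)⁻¹ + D) * diagonal (fun c => f c (a c * z)) -
    diagonal fun c => a c * z * deriv (f c) (a c * z)

theorem entrywiseDifferentiableOn_matchingMatrix {m : Type*} [Fintype m] [DecidableEq m]
    {R : ℂ → Matrix m m ℂ} {s : Set ℂ} (hR : EntrywiseDifferentiableOn R s)
    (hdet : ∀ z ∈ s, (R z).det ≠ 0) (D : Matrix m m ℂ) (a : m → ℂ) {f : m → ℂ → ℂ}
    (hf : ∀ c, Differentiable ℂ (f c)) :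
    EntrywiseDifferentiableOn (matchingMatrix R D a f) s := by
  have hscale : ∀ {g : ℂ → ℂ}, Differentiable ℂ g → ∀ c,
      DifferentiableOn ℂ (fun z => g (a c * z)) s :=
    fun hg c => (hg.comp (differentiable_id.const_mul _)).differentiableOn
  refine (((hR.inv hdet).add (entrywiseDifferentiableOn_const D)).mul
    (entrywiseDifferentiableOn_diagonal fun c => hscale (hf c) c)).sub
    (entrywiseDifferentiableOn_diagonal fun c => ?_)
  exact (differentiableOn_id.const_mul _).mul (hscale (hf c).deriv c)

/-- **Scattering matrix poles are the radioactive poles.** In multichannel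
R-matrix theory, if `M(ω)` is invertible (i.e. `ω` is not a pole of the Kapur–Peierls
operator), the scattering matrix extends holomorphically across `ω`, even when some
outgoing wavefunctions vanish there: the roots of the outgoing wavefunctions are
removable singularities (not poles) of the analytically continued scattering matrix. -/
theorem stmt6 (n : ℕ) (a : Fin n → ℝ) (ha : ∀ c, 0 < a c)
    (O Iw : Fin n → ℂ → ℂ)
    (hO : ∀ c, Differentiable ℂ (O c)) (hIw : ∀ c, Differentiable ℂ (Iw c))
    (hWr : ∀ c (ρ : ℂ), deriv (O c) ρ * Iw c ρ - deriv (Iw c) ρ * O c ρ = 2 * Complex.I)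
    (ω : ℂ) (hω : ω ≠ 0) (V : Set ℂ) (hV : IsOpen V) (hωV : ω ∈ V)
    (R : ℂ → Matrix (Fin n) (Fin n) ℂ)
    (hR : ∀ i j, DifferentiableOn ℂ (fun z => R z i j) V)
    (hRinv : ∀ z ∈ V, IsUnit (R z).det)
    (B : Fin n → ℝ)
    (q : Fin n → ℂ → ℂ) (hq : ∀ c, DifferentiableOn ℂ (q c) V)
    (hq2 : ∀ c, ∀ z ∈ V, (q c z) ^ 2 = (a c : ℂ) * z)
    (Om Imat Lm RL U M : ℂ → Matrix (Fin n) (Fin n) ℂ)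
    (hOm : ∀ z, Om z = Matrix.diagonal fun c => O c ((a c : ℂ) * z))
    (hImat : ∀ z, Imat z = Matrix.diagonal fun c => Iw c ((a c : ℂ) * z))
    (hLm : ∀ z, Lm z = Matrix.diagonal fun c =>
      (a c : ℂ) * z * deriv (O c) ((a c : ℂ) * z) / O c ((a c : ℂ) * z))
    (hRL : ∀ z, RL z = (1 - R z * (Lm z - Matrix.diagonal fun c => (B c : ℂ)))⁻¹ * R z)
    (hU : ∀ z, U z = (Om z)⁻¹ * Imat z +
      (2 * Complex.I) • ((Matrix.diagonal fun c => q c z) * (Om z)⁻¹ * RL z * (Om z)⁻¹ *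
        Matrix.diagonal fun c => q c z))
    (hM : ∀ z, M z = (R z)⁻¹ * Om z + (Matrix.diagonal fun c => (B c : ℂ)) * Om z -
      Matrix.diagonal fun c => (a c : ℂ) * z * deriv (O c) ((a c : ℂ) * z))
    (hMω : IsUnit (M ω).det) :
    ∃ N ⊆ V, IsOpen N ∧ ω ∈ N ∧
      ∃ W : ℂ → Matrix (Fin n) (Fin n) ℂ,
        (∀ i j, DifferentiableOn ℂ (fun z => W z i j) N) ∧
        ∀ z ∈ N, (∀ c, O c ((a c : ℂ) * z) ≠ 0) → W z = U z := by
  set D : Matrix (Fin n) (Fin n) ℂ := diagonal fun c => (B c : ℂ)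
  have hMeq : M = matchingMatrix R D (fun c => (a c : ℂ)) O :=
    funext fun z => by rw [hM, hOm, matchingMatrix, add_mul]
  have hRd : EntrywiseDifferentiableOn R V := hR
  have hRdet : ∀ z ∈ V, (R z).det ≠ 0 := fun z hz => (hRinv z hz).ne_zero
  have hMd : EntrywiseDifferentiableOn M V :=
    hMeq ▸ entrywiseDifferentiableOn_matchingMatrix hRd hRdet D _ hO
  have hq0 : ∀ c, ∀ z ∈ V, z ≠ 0 → q c z ≠ 0 := fun c z hz hz0 =>
    (pow_ne_zero_iff two_ne_zero).mp <| by
      rw [hq2 c z hz]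
      exact mul_ne_zero (Complex.ofReal_ne_zero.mpr (ha c).ne') hz0
  let N := V ∩ (fun z => (M z).det) ⁻¹' {0}ᶜ ∩ {0}ᶜ
  have hNV : N ⊆ V := fun z hz => hz.1.1
  refine ⟨N, hNV, (hMd.det.continuousOn.isOpen_inter_preimage hV isOpen_compl_singleton).inter
      isOpen_compl_singleton, ⟨⟨hωV, hMω.ne_zero⟩, hω⟩,
    fun z => diagonal (fun c => q c z) * (M z)⁻¹ *
      matchingMatrix R D (fun c => (a c : ℂ)) Iw z * diagonal fun c => (q c z)⁻¹, ?_, ?_⟩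
  · exact (((entrywiseDifferentiableOn_diagonal fun c => (hq c).mono hNV).mul
      ((hMd.mono hNV).inv fun z hz => hz.1.2)).mul
      ((entrywiseDifferentiableOn_matchingMatrix hRd hRdet D _ hIw).mono hNV)).mul
      (entrywiseDifferentiableOn_diagonal fun c =>
        ((hq c).mono hNV).inv fun z hz => hq0 c z hz.1.1 hz.2)
  · rintro z ⟨⟨hzV, hMz⟩, hz0⟩ hOz
    rw [hMeq] at hMz ⊢
    rw [hU, hRL, hOm, hImat, hLm]
    exact (scatteringMatrix_eq (hRinv z hzV) (isUnit_iff_ne_zero.mpr hMz) hOz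
      (fun c => hq0 c z hzV hz0) (fun c => hq2 c z hzV) (fun c => hWr c _)).symm
end

section
/- (Gohberg–Sigal residue normalization, non-degenerate case.) If the kernel of M(z₀) is one-dimensional, spanned by a nonzero vector q ∈ ℂⁿ with qᵀ·M'(z₀)·q ≠ 0, then M(z) is invertible for all z ≠ z₀ in some punctured neighborhood of z₀, and (z − z₀)·M(z)⁻¹ converges, as z → z₀ with z ≠ z₀, to (qᵀ·M'(z₀)·q)⁻¹ · (q·qᵀ). In particular M(z)⁻¹ has a simple (Laurent order one) pole at z₀ whose residue is the rank-one matrix q·qᵀ normalized so that qᵀ·M'(z₀)·q = 1. -/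
open Matrix Topology Filter

/-!
The kernel of the symmetric matrix `A = M z₀` is the line through `q`, so the columns of
`adj A` are multiples of `q` and, `adj A` being symmetric, `adj A = α • q qᵀ`; `α ≠ 0` because
the diagonal cofactor at a coordinate `i₀` with `q i₀ ≠ 0` is the determinant of an injective
matrix. Applying `adj (M z)` to `M z q = (M z - A) q` gives
`det (M z) • q = adj (M z) ((M z - A) q)`; dividing by `z - z₀` and letting `z → z₀` yields
`det (M z) / (z - z₀) → α · qᵀ M' q ≠ 0`. Hence `M z` is invertible near `z₀`, and
`(z - z₀) • M(z)⁻¹ = (det (M z) / (z - z₀))⁻¹ • adj (M z) → (α · qᵀ M' q)⁻¹ • α • q qᵀ`.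
-/

namespace Matrix

variable {n K : Type*} [Fintype n] [Field K]

theorem mulVec_eq_zero_of_vecMul_eq_zero_of_forall_ne {A : Matrix n n K} {p v : n → K} {i₀ : n}
    (hpA : p ᵥ* A = 0) (hp : p i₀ ≠ 0) (hv : ∀ i ≠ i₀, (A *ᵥ v) i = 0) : A *ᵥ v = 0 := by
  have hdot : p ⬝ᵥ (A *ᵥ v) = p i₀ * (A *ᵥ v) i₀ :=
    Finset.sum_eq_single i₀ (fun i _ hi => by rw [hv i hi, mul_zero]) (by simp)
  rw [dotProduct_mulVec, hpA, zero_dotProduct, eq_comm, mul_eq_zero] at hdot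
  ext i
  rcases eq_or_ne i i₀ with rfl | hi
  · exact hdot.resolve_left hp
  · exact hv i hi

variable [DecidableEq n]

theorem adjugate_apply_self_ne_zero {A : Matrix n n K} {q : n → K} {i₀ : n}
    (hqA : q ᵥ* A = 0) (hker : ∀ v, A *ᵥ v = 0 → ∃ c : K, v = c • q) (hq : q i₀ ≠ 0) :
    A.adjugate i₀ i₀ ≠ 0 := by
  rw [adjugate_apply, Ne, ← exists_mulVec_eq_zero_iff]
  rintro ⟨v, hv0, hv⟩
  have hvi : ∀ i, Function.update (A *ᵥ v) i₀ (v i₀) i = 0 := by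
    simpa [updateRow_mulVec, funext_iff] using hv
  have hAv : A *ᵥ v = 0 := mulVec_eq_zero_of_vecMul_eq_zero_of_forall_ne hqA hq
    fun i hi => by simpa [hi] using hvi i
  obtain ⟨c, rfl⟩ := hker v hAv
  have hc : c = 0 := by simpa [hq] using hvi i₀
  exact hv0 (by rw [hc, zero_smul])

theorem exists_adjugate_eq_smul_vecMulVec {A : Matrix n n K} (hA : A.IsSymm) {q : n → K}
    (hq : q ≠ 0) (hAq : A *ᵥ q = 0) (hker : ∀ v, A *ᵥ v = 0 → ∃ c : K, v = c • q) :
    ∃ α : K, α ≠ 0 ∧ A.adjugate = α • vecMulVec q q := by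
  obtain ⟨i₀, hqi₀⟩ : ∃ i, q i ≠ 0 := Function.ne_iff.mp hq
  have hdet : A.det = 0 := exists_mulVec_eq_zero_iff.mp ⟨q, hq, hAq⟩
  have hcol : ∀ j, ∃ c : K, A.adjugate.col j = c • q := fun j => hker _ <| by
    rw [← mulVec_single_one, mulVec_mulVec, mul_adjugate, hdet, zero_smul, zero_mulVec]
  choose c hc using hcol
  have hadj : ∀ i j, A.adjugate i j = c j * q i := fun i j => by
    simpa using congrFun (hc j) i
  have hc_eq : ∀ j, c j = c i₀ / q i₀ * q j := fun j => by
    have := hA.adjugate.apply i₀ j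
    rw [hadj, hadj] at this
    field_simp
    linear_combination -this
  refine ⟨c i₀ / q i₀, fun hα => ?_, ?_⟩
  · refine adjugate_apply_self_ne_zero (q := q) ?_ hker hqi₀ ?_
    · rw [← hA.eq, vecMul_transpose, hAq]
    · rw [hadj, hc_eq, hα]; ring
  · ext i j
    rw [hadj, hc_eq]
    simp only [smul_apply, vecMulVec_apply, smul_eq_mul]
    ring

theorem det_smul_eq_adjugate_mulVec_sub_mulVec {R : Type*} [CommRing R] {A : Matrix n n R}
    {q : n → R} (hAq : A *ᵥ q = 0) (B : Matrix n n R) :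
    B.det • q = B.adjugate *ᵥ ((B - A) *ᵥ q) := by
  rw [sub_mulVec, hAq, sub_zero, mulVec_mulVec, adjugate_mul, smul_mulVec, one_mulVec]

end Matrix

theorem Filter.Tendsto.matrix_mulVec {α m n R : Type*} [Fintype n] [TopologicalSpace R]
    [NonUnitalNonAssocSemiring R] [IsTopologicalSemiring R] {l : Filter α}
    {f : α → Matrix m n R} {g : α → n → R} {A : Matrix m n R} {v : n → R}
    (hf : Tendsto f l (𝓝 A)) (hg : Tendsto g l (𝓝 v)) :
    Tendsto (fun x => f x *ᵥ g x) l (𝓝 (A *ᵥ v)) :=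
  ((continuous_fst.matrix_mulVec continuous_snd).tendsto (A, v)).comp (hf.prodMk_nhds hg)

theorem tendsto_slope_of_hasDerivAt_apply {𝕜 m n : Type*} [NontriviallyNormedField 𝕜] {z₀ : 𝕜}
    {M : 𝕜 → Matrix m n 𝕜} {M' : Matrix m n 𝕜}
    (hM : ∀ i j, HasDerivAt (fun z => M z i j) (M' i j) z₀) :
    Tendsto (slope M z₀) (𝓝[≠] z₀) (𝓝 M') :=
  tendsto_pi_nhds.2 fun i => tendsto_pi_nhds.2 fun j =>
    (hasDerivAt_iff_tendsto_slope.mp (hM i j)).congr fun z => by simp [slope_def_module]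

section Residue

variable {𝕜 : Type*} [NontriviallyNormedField 𝕜] {n : Type*} [Fintype n] [DecidableEq n]
  {M : 𝕜 → Matrix n n 𝕜} {z₀ : 𝕜}

theorem continuousAt_adjugate_of_apply (hM : ∀ i j, ContinuousAt (fun z => M z i j) z₀) :
    ContinuousAt (fun z => (M z).adjugate) z₀ :=
  continuous_id.matrix_adjugate.continuousAt.comp <|
    continuousAt_pi.2 fun i => continuousAt_pi.2 (hM i)

theorem tendsto_of_tendsto_smul_const {α ι : Type*} {l : Filter α} {f : α → 𝕜} {c : 𝕜}
    {q : ι → 𝕜} {i₀ : ι} (hq : q i₀ ≠ 0) (h : Tendsto (fun x => f x • q) l (𝓝 (c • q))) :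
    Tendsto f l (𝓝 c) := by
  have := ((continuous_apply i₀).tendsto _).comp h
  simpa [Function.comp_def, hq] using this.mul_const (q i₀)⁻¹

theorem tendsto_det_div_sub_smul {M' : Matrix n n 𝕜} {q : n → 𝕜}
    (hM : ∀ i j, HasDerivAt (fun z => M z i j) (M' i j) z₀) (hq : M z₀ *ᵥ q = 0) :
    Tendsto (fun z => ((M z).det / (z - z₀)) • q) (𝓝[≠] z₀)
      (𝓝 ((M z₀).adjugate *ᵥ (M' *ᵥ q))) := by
  have hadj : Tendsto (fun z => (M z).adjugate) (𝓝[≠] z₀) (𝓝 (M z₀).adjugate) :=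
    (continuousAt_adjugate_of_apply fun i j => (hM i j).continuousAt).tendsto.mono_left
      nhdsWithin_le_nhds
  have hslope := (tendsto_slope_of_hasDerivAt_apply hM).matrix_mulVec
    (tendsto_const_nhds (x := q))
  refine (hadj.matrix_mulVec hslope).congr fun z => ?_
  rw [slope_def_module, smul_mulVec, mulVec_smul, ← det_smul_eq_adjugate_mulVec_sub_mulVec hq,
    smul_smul, div_eq_inv_mul]

theorem tendsto_sub_smul_inv_of_tendsto_det_div {D : 𝕜}
    (hM : ∀ i j, ContinuousAt (fun z => M z i j) z₀) (hD : D ≠ 0)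
    (hdet : Tendsto (fun z => (M z).det / (z - z₀)) (𝓝[≠] z₀) (𝓝 D)) :
    (∀ᶠ z in 𝓝[≠] z₀, IsUnit (M z).det) ∧
      Tendsto (fun z => (z - z₀) • (M z)⁻¹) (𝓝[≠] z₀) (𝓝 (D⁻¹ • (M z₀).adjugate)) := by
  refine ⟨(hdet.eventually_ne hD).mono fun z hz => (div_ne_zero_iff.mp hz).1.isUnit, ?_⟩
  have hadj : Tendsto (fun z => (M z).adjugate) (𝓝[≠] z₀) (𝓝 (M z₀).adjugate) :=
    (continuousAt_adjugate_of_apply hM).tendsto.mono_left nhdsWithin_le_nhds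
  refine ((hdet.inv₀ hD).smul hadj).congr fun z => ?_
  rw [inv_def, Ring.inverse_eq_inv, smul_smul, inv_div, div_eq_mul_inv]

end Residue

/-- **Gohberg–Sigal residue normalization, non-degenerate case.** If the
kernel of the holomorphic complex-symmetric matrix function `M` at `z₀` is the line
spanned by `q` with `qᵀ·M'(z₀)·q ≠ 0`, then `M(z)` is invertible on a punctured
neighborhood of `z₀` and `(z − z₀)·M(z)⁻¹ → (qᵀ·M'(z₀)·q)⁻¹ · q·qᵀ`: a simple pole
with rank-one residue normalized by `qᵀ·M'(z₀)·q = 1`. -/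
theorem stmt7 (U : Set ℂ) (hU : IsOpen U) (z₀ : ℂ) (hz₀ : z₀ ∈ U) (n : ℕ)
    (M : ℂ → Matrix (Fin n) (Fin n) ℂ)
    (hM : ∀ i j, DifferentiableOn ℂ (fun z => M z i j) U)
    (hsym : ∀ z ∈ U, (M z)ᵀ = M z)
    (M' : Matrix (Fin n) (Fin n) ℂ)
    (hM' : ∀ i j, M' i j = deriv (fun z => M z i j) z₀)
    (q : Fin n → ℂ) (hq : q ≠ 0)
    (hker : (M z₀).mulVec q = 0)
    (hker1 : ∀ v, (M z₀).mulVec v = 0 → ∃ c : ℂ, v = c • q)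
    (hnorm : q ⬝ᵥ M'.mulVec q ≠ 0) :
    (∀ᶠ z in 𝓝[≠] z₀, IsUnit (M z).det) ∧
      Tendsto (fun z : ℂ => (z - z₀) • (M z)⁻¹) (𝓝[≠] z₀)
        (𝓝 ((q ⬝ᵥ M'.mulVec q)⁻¹ • vecMulVec q q)) := by
  obtain ⟨α, hα, hadj⟩ := exists_adjugate_eq_smul_vecMulVec (hsym z₀ hz₀) hq hker hker1
  have hder : ∀ i j, HasDerivAt (fun z => M z i j) (M' i j) z₀ := fun i j =>
    hM' i j ▸ ((hM i j).differentiableAt (hU.mem_nhds hz₀)).hasDerivAt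
  have hdet : Tendsto (fun z => (M z).det / (z - z₀)) (𝓝[≠] z₀)
      (𝓝 (α * (q ⬝ᵥ M' *ᵥ q))) := by
    obtain ⟨i₀, hi₀⟩ : ∃ i, q i ≠ 0 := Function.ne_iff.mp hq
    refine tendsto_of_tendsto_smul_const hi₀ ?_
    convert tendsto_det_div_sub_smul hder hker using 2
    rw [hadj, smul_mulVec, vecMulVec_mulVec, op_smul_eq_smul, smul_smul]
  obtain ⟨hunit, hres⟩ := tendsto_sub_smul_inv_of_tendsto_det_div
    (fun i j => (hder i j).continuousAt) (mul_ne_zero hα hnorm) hdet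
  refine ⟨hunit, ?_⟩
  rwa [hadj, smul_smul, mul_inv, mul_right_comm, inv_mul_cancel₀ hα, one_mul] at hres
end

section
/- (Gohberg–Sigal residue normalization, degenerate semi-simple case.) If the kernel of M(z₀) has dimension K ≥ 1 and admits a basis q_1,…,q_K normalized so that q_mᵀ·M'(z₀)·q_{m'} = δ_{m,m'} for all m, m', then M(z) is invertible for all z ≠ z₀ in some punctured neighborhood of z₀, and (z − z₀)·M(z)⁻¹ converges, as z → z₀ with z ≠ z₀, to Σ_{m=1}^{K} q_m·q_mᵀ. In particular the pole of M(z)⁻¹ at z₀ has Laurent order one with a residue of rank K. -/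
/-!
Let `P` be the matrix with rows `q_m`, so that `Q = Pᵀ` has them as columns, `R = Q P` is the
claimed residue and `N = R M'(z₀)`. As `M(z₀) N = 0`, right multiplication by
`F(z) = 1 - N + (z - z₀)⁻¹ N` divides out the zero of `M` along its kernel: `M(z) F(z)` tends
to `L = M(z₀) + M'(z₀) N`. Symmetry turns the kernel vectors into left null vectors,
`P M(z₀) = 0`, and with `P M'(z₀) Q = 1` this gives `P L = P M'(z₀)`; hence `L` is invertible
(its kernel would lie in `ker M(z₀) = range Q`, where `P M'(z₀)` is injective) and
`(z - z₀) M(z)⁻¹ = (z - z₀) F(z) (M(z) F(z))⁻¹ → N L⁻¹ = Q P L L⁻¹ = R`.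
The same identity `P M'(z₀) Q = 1` forces `rank R = K`.
-/

open Matrix Topology Filter

namespace Matrix

variable {𝕜 ι κ : Type*}

theorem rank_mul_of_mul_mul_eq_one {R : Type*} [CommRing R] [StrongRankCondition R] [Fintype ι]
    [Fintype κ] [DecidableEq κ] {Q : Matrix ι κ R} {P : Matrix κ ι R} {A : Matrix ι ι R}
    (h : P * A * Q = 1) : (Q * P).rank = Fintype.card κ := by
  refine le_antisymm ((rank_mul_le_left _ _).trans (rank_le_card_width _)) ?_
  calc Fintype.card κ = (P * A * Q * (P * A * Q)).rank := by rw [h, Matrix.one_mul, rank_one]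
    _ = (P * A * (Q * P) * (A * Q)).rank := by simp only [Matrix.mul_assoc]
    _ ≤ (Q * P).rank := (rank_mul_le_left _ _).trans (rank_mul_le_right _ _)

section Field

variable [Field 𝕜] [Fintype ι] [Fintype κ] [DecidableEq κ] {M₀ M' : Matrix ι ι 𝕜}
  {Q : Matrix ι κ 𝕜} {P : Matrix κ ι 𝕜}

theorem mul_add_mul_mul_mul_eq_mul (hPM₀ : P * M₀ = 0) (hnorm : P * M' * Q = 1) :
    P * (M₀ + M' * (Q * P * M')) = P * M' := by
  rw [Matrix.mul_add, hPM₀, zero_add]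
  calc P * (M' * (Q * P * M')) = P * M' * Q * P * M' := by simp only [Matrix.mul_assoc]
    _ = P * M' := by rw [hnorm, Matrix.one_mul]

theorem isUnit_det_add_mul_mul_mul [DecidableEq ι] (hPM₀ : P * M₀ = 0) (hnorm : P * M' * Q = 1)
    (hker : ∀ v, M₀ *ᵥ v = 0 → ∃ c, v = Q *ᵥ c) :
    IsUnit (M₀ + M' * (Q * P * M')).det := by
  rw [isUnit_iff_ne_zero, Ne, ← exists_mulVec_eq_zero_iff]
  rintro ⟨v, hv0, hv⟩
  have hPM'v : P *ᵥ (M' *ᵥ v) = 0 := by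
    rw [mulVec_mulVec, ← mul_add_mul_mul_mul_eq_mul hPM₀ hnorm, ← mulVec_mulVec, hv,
      mulVec_zero]
  obtain ⟨c, rfl⟩ := hker v (by simpa [add_mulVec, ← mulVec_mulVec, hPM'v] using hv)
  have hc : c = 0 := by simpa [mulVec_mulVec, ← Matrix.mul_assoc, hnorm] using hPM'v
  exact hv0 (by rw [hc, mulVec_zero])

end Field

section Analysis

variable [NontriviallyNormedField 𝕜] {z₀ : 𝕜}

theorem tendsto_slope_of_hasDerivAt {M : 𝕜 → Matrix κ ι 𝕜} {M' : Matrix κ ι 𝕜}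
    (hM : ∀ i j, HasDerivAt (fun z => M z i j) (M' i j) z₀) :
    Tendsto (slope M z₀) (𝓝[≠] z₀) (𝓝 M') :=
  tendsto_pi_nhds.2 fun i => tendsto_pi_nhds.2 fun j =>
    (hasDerivAt_iff_tendsto_slope.1 (hM i j)).congr fun z => by simp [slope_def_module]

theorem continuousAt_of_hasDerivAt {M : 𝕜 → Matrix κ ι 𝕜} {M' : Matrix κ ι 𝕜}
    (hM : ∀ i j, HasDerivAt (fun z => M z i j) (M' i j) z₀) : ContinuousAt M z₀ :=
  continuousAt_pi.2 fun i => continuousAt_pi.2 fun j => (hM i j).continuousAt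

theorem tendsto_sub_smul_one_sub_add_inv_smul [DecidableEq ι] (N : Matrix ι ι 𝕜) :
    Tendsto (fun z => (z - z₀) • (1 - N + (z - z₀)⁻¹ • N)) (𝓝[≠] z₀)
      (𝓝 N) := by
  have hsub : Tendsto (fun z : 𝕜 => z - z₀) (𝓝[≠] z₀) (𝓝 0) := by
    simpa using (tendsto_id.sub_const z₀).mono_left (nhdsWithin_le_nhds (a := z₀))
  have hlin : Tendsto (fun z => (z - z₀) • (1 - N) + N) (𝓝[≠] z₀) (𝓝 N) := by
    simpa using (hsub.smul_const (1 - N)).add_const N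
  refine hlin.congr' ?_
  filter_upwards [self_mem_nhdsWithin] with z hz
  simp [smul_add, smul_smul, mul_inv_cancel₀ (sub_ne_zero.2 hz)]

variable [Fintype ι] [DecidableEq ι] {M : 𝕜 → Matrix ι ι 𝕜} {M' : Matrix ι ι 𝕜}

theorem tendsto_mul_one_sub_add_inv_smul (hM : ∀ i j, HasDerivAt (fun z => M z i j) (M' i j) z₀)
    {N : Matrix ι ι 𝕜} (hN : M z₀ * N = 0) :
    Tendsto (fun z => M z * (1 - N + (z - z₀)⁻¹ • N)) (𝓝[≠] z₀)
      (𝓝 (M z₀ + M' * N)) := by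
  have hsplit :
      ∀ z, M z * (1 - N + (z - z₀)⁻¹ • N) = M z - M z * N + slope M z₀ z * N := by
    intro z
    rw [slope_def_module, Matrix.smul_mul, Matrix.sub_mul, hN, sub_zero, Matrix.mul_add,
      Matrix.mul_sub, Matrix.mul_one, Matrix.mul_smul]
  have hcont : Tendsto M (𝓝[≠] z₀) (𝓝 (M z₀)) :=
    (continuousAt_of_hasDerivAt hM).tendsto.mono_left nhdsWithin_le_nhds
  simp_rw [hsplit]
  simpa [hN] using (hcont.sub (hcont.mul_const N)).add
    ((tendsto_slope_of_hasDerivAt hM).mul_const N)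

theorem eventually_isUnit_det_and_tendsto_sub_smul_inv [Fintype κ] [DecidableEq κ]
    {Q : Matrix ι κ 𝕜} {P : Matrix κ ι 𝕜}
    (hM : ∀ i j, HasDerivAt (fun z => M z i j) (M' i j) z₀) (hMQ : M z₀ * Q = 0)
    (hPM : P * M z₀ = 0) (hnorm : P * M' * Q = 1)
    (hker : ∀ v, M z₀ *ᵥ v = 0 → ∃ c, v = Q *ᵥ c) :
    (∀ᶠ z in 𝓝[≠] z₀, IsUnit (M z).det) ∧
      Tendsto (fun z => (z - z₀) • (M z)⁻¹) (𝓝[≠] z₀) (𝓝 (Q * P)) := by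
  set N := Q * P * M'
  set F : 𝕜 → Matrix ι ι 𝕜 := fun z => 1 - N + (z - z₀)⁻¹ • N
  set L₀ := M z₀ + M' * N
  have hL : Tendsto (fun z => M z * F z) (𝓝[≠] z₀) (𝓝 L₀) :=
    tendsto_mul_one_sub_add_inv_smul hM
      (by simp only [N, ← Matrix.mul_assoc, hMQ, Matrix.zero_mul])
  have hL₀ : IsUnit L₀.det := isUnit_det_add_mul_mul_mul hPM hnorm hker
  have hLdet : ∀ᶠ z in 𝓝[≠] z₀, IsUnit (M z * F z).det := by
    simpa [isUnit_iff_ne_zero] using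
      ((continuous_id.matrix_det.tendsto L₀).comp hL).eventually_ne (isUnit_iff_ne_zero.1 hL₀)
  have hMdet : ∀ᶠ z in 𝓝[≠] z₀, IsUnit (M z).det :=
    hLdet.mono fun z hz => isUnit_of_mul_isUnit_left (det_mul (M z) (F z) ▸ hz)
  refine ⟨hMdet, ?_⟩
  have hLinv : Tendsto (fun z => (M z * F z)⁻¹) (𝓝[≠] z₀) (𝓝 L₀⁻¹) :=
    (continuousAt_matrix_inv L₀ (NormedRing.inverse_continuousAt hL₀.unit)).tendsto.comp hL
  have hres : N * L₀⁻¹ = Q * P := by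
    calc N * L₀⁻¹ = Q * (P * L₀) * L₀⁻¹ := by
          rw [mul_add_mul_mul_mul_eq_mul hPM hnorm, ← Matrix.mul_assoc]
      _ = Q * P := by rw [← Matrix.mul_assoc]; exact mul_nonsing_inv_cancel_right L₀ _ hL₀
  refine (hres ▸ (tendsto_sub_smul_one_sub_add_inv_smul N).mul hLinv).congr' ?_
  filter_upwards [hLdet] with z hz
  have hMinv : (M z)⁻¹ = F z * (M z * F z)⁻¹ :=
    inv_eq_right_inv (by rw [← Matrix.mul_assoc, mul_nonsing_inv _ hz])
  rw [hMinv, Matrix.smul_mul]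

end Analysis

end Matrix

theorem stmt8_general (U : Set ℂ) (hU : IsOpen U) (z₀ : ℂ) (hz₀ : z₀ ∈ U) (n K : ℕ)
    (M : ℂ → Matrix (Fin n) (Fin n) ℂ)
    (hM : ∀ i j, DifferentiableOn ℂ (fun z => M z i j) U)
    (hsym : ∀ z ∈ U, (M z)ᵀ = M z)
    (M' : Matrix (Fin n) (Fin n) ℂ)
    (hM' : ∀ i j, M' i j = deriv (fun z => M z i j) z₀)
    (q : Fin K → Fin n → ℂ)
    (hker : ∀ m, (M z₀).mulVec (q m) = 0)
    (hspan : ∀ v, (M z₀).mulVec v = 0 → ∃ c : Fin K → ℂ, v = ∑ m, c m • q m)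
    (hnorm : ∀ m m', q m ⬝ᵥ M'.mulVec (q m') = if m = m' then 1 else 0) :
    (∀ᶠ z in 𝓝[≠] z₀, IsUnit (M z).det) ∧
      Tendsto (fun z : ℂ => (z - z₀) • (M z)⁻¹) (𝓝[≠] z₀)
        (𝓝 (∑ m, vecMulVec (q m) (q m))) ∧
      (∑ m, vecMulVec (q m) (q m)).rank = K := by
  have hderiv : ∀ i j, HasDerivAt (fun z => M z i j) (M' i j) z₀ := fun i j =>
    hM' i j ▸ ((hM i j).differentiableAt (hU.mem_nhds hz₀)).hasDerivAt
  have hMQ : M z₀ * (of q)ᵀ = 0 := by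
    ext i m
    exact congrFun (hker m) i
  have hPM : of q * M z₀ = 0 := by
    calc of q * M z₀ = (M z₀ * (of q)ᵀ)ᵀ := by
          rw [transpose_mul, transpose_transpose, hsym z₀ hz₀]
      _ = 0 := by rw [hMQ, transpose_zero]
  have hPM'Q : of q * M' * (of q)ᵀ = 1 := by
    ext m m'
    rw [Matrix.mul_assoc, mul_apply', one_apply, ← hnorm]
    rfl
  have hspan' : ∀ v, M z₀ *ᵥ v = 0 → ∃ c, v = (of q)ᵀ *ᵥ c := fun v hv => by
    obtain ⟨c, rfl⟩ := hspan v hv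
    exact ⟨c, by rw [mulVec_transpose, vecMul_eq_sum]; rfl⟩
  have hres : (of q)ᵀ * of q = ∑ m, vecMulVec (q m) (q m) := by
    ext i j
    simp [mul_apply, Matrix.sum_apply, vecMulVec_apply]
  rw [← hres]
  obtain ⟨hdet, hlim⟩ :=
    eventually_isUnit_det_and_tendsto_sub_smul_inv hderiv hMQ hPM hPM'Q hspan'
  exact ⟨hdet, hlim, by rw [rank_mul_of_mul_mul_eq_one hPM'Q, Fintype.card_fin]⟩

/-- **Gohberg–Sigal residue normalization, degenerate semi-simple case.**
If the kernel of the holomorphic complex-symmetric matrix function `M` at `z₀` has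
dimension `K ≥ 1` with a basis `q_1,…,q_K` normalized by `q_mᵀ·M'(z₀)·q_{m'} = δ_{m,m'}`,
then `M(z)` is invertible on a punctured neighborhood of `z₀` and
`(z − z₀)·M(z)⁻¹ → Σ_m q_m·q_mᵀ`: a Laurent-order-one pole with a rank-`K` residue. -/
theorem stmt8 (U : Set ℂ) (hU : IsOpen U) (z₀ : ℂ) (hz₀ : z₀ ∈ U) (n K : ℕ) (hK : 1 ≤ K)
    (M : ℂ → Matrix (Fin n) (Fin n) ℂ)
    (hM : ∀ i j, DifferentiableOn ℂ (fun z => M z i j) U)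
    (hsym : ∀ z ∈ U, (M z)ᵀ = M z)
    (M' : Matrix (Fin n) (Fin n) ℂ)
    (hM' : ∀ i j, M' i j = deriv (fun z => M z i j) z₀)
    (q : Fin K → Fin n → ℂ)
    (hindep : LinearIndependent ℂ q)
    (hker : ∀ m, (M z₀).mulVec (q m) = 0)
    (hspan : ∀ v, (M z₀).mulVec v = 0 → ∃ c : Fin K → ℂ, v = ∑ m, c m • q m)
    (hnorm : ∀ m m', q m ⬝ᵥ M'.mulVec (q m') = if m = m' then 1 else 0) :
    (∀ᶠ z in 𝓝[≠] z₀, IsUnit (M z).det) ∧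
      Tendsto (fun z : ℂ => (z - z₀) • (M z)⁻¹) (𝓝[≠] z₀)
        (𝓝 (∑ m, vecMulVec (q m) (q m))) ∧
      (∑ m, vecMulVec (q m) (q m)).rank = K :=
  stmt8_general U hU z₀ hz₀ n K M hM hsym M' hM' q hker hspan hnorm
end

section
/- (Semi-simplicity criterion.) Suppose M(z₀) is singular and det(M(z)) is not identically zero near z₀, so det(M(z)) has a zero of some finite order at z₀. Then the order of this zero equals dim ker M(z₀) (i.e., the algebraic multiplicity equals the geometric multiplicity, so the pole of M(z)⁻¹ at z₀ has Laurent order one) if and only if for every nonzero v ∈ ker M(z₀) there exists w ∈ ker M(z₀) with vᵀ·M'(z₀)·w ≠ 0. -/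
/-!
Choose a basis whose first `r = dim ker M(z₀)` vectors span `ker M(z₀)`. In that basis the first
`r` columns of `M(z)` vanish at `z₀`; dividing them by `z - z₀` gives
`det M(z) = (z - z₀)^r · det F(z)` with `F` holomorphic and `F(z₀)` the matrix of
`M(z₀) + M'(z₀) P`, where `P` is a projection onto `ker M(z₀)`. So the zero has order `r` exactly
when `M(z₀) + M'(z₀) P` is invertible, and since `M(z₀)` and `M'(z₀)` are symmetric this happens
exactly when `(v, w) ↦ vᵀ M'(z₀) w` is nondegenerate on `ker M(z₀)`.
-/

open Matrix Topology Filter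

section Analytic

variable {𝕜 : Type*} [NontriviallyNormedField 𝕜] {z₀ : 𝕜}

theorem AnalyticAt.dslope {f : 𝕜 → 𝕜} (hf : AnalyticAt 𝕜 f z₀) :
    AnalyticAt 𝕜 (dslope f z₀) z₀ :=
  let ⟨p, hp⟩ := hf
  ⟨p.fslope, hp.has_fpower_series_dslope_fslope⟩

theorem AnalyticAt.matrix_det {ι : Type*} [Fintype ι] [DecidableEq ι] {A : 𝕜 → Matrix ι ι 𝕜}
    (hA : ∀ i j, AnalyticAt 𝕜 (fun z => A z i j) z₀) :
    AnalyticAt 𝕜 (fun z => (A z).det) z₀ := by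
  simp only [det_apply']
  exact Finset.analyticAt_fun_sum _ fun σ _ =>
    analyticAt_const.mul (Finset.analyticAt_fun_prod _ fun i _ => hA _ _)

theorem analyticOrderAt_det_eq_card_iff {κ τ : Type*} [Fintype κ] [Fintype τ] [DecidableEq κ]
    [DecidableEq τ] {N : 𝕜 → Matrix (κ ⊕ τ) (κ ⊕ τ) 𝕜} {N' : Matrix (κ ⊕ τ) κ 𝕜}
    (hN : ∀ i j, AnalyticAt 𝕜 (fun z => N z i j) z₀)
    (hN' : ∀ i a, HasDerivAt (fun z => N z i (Sum.inl a)) (N' i a) z₀)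
    (hN₀ : ∀ i a, N z₀ i (Sum.inl a) = 0) :
    analyticOrderAt (fun z => (N z).det) z₀ = Fintype.card κ ↔
      (fromCols N' (N z₀).toCols₂).det ≠ 0 := by
  set F : 𝕜 → Matrix (κ ⊕ τ) (κ ⊕ τ) 𝕜 := fun z =>
    fromCols (of fun i a => dslope (fun w => N w i (Sum.inl a)) z₀ z) (N z).toCols₂
  have hNF : ∀ z, N z = of fun i j => Sum.elim (fun _ => z - z₀) (fun _ => 1) j * F z i j := by
    intro z
    ext i (a | c)
    · simpa [F, hN₀] using (sub_smul_dslope (fun w => N w i (Sum.inl a)) z₀ z).symm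
    · simp [F]
  have hdet : (fun z => (N z).det) = (· - z₀) ^ Fintype.card κ * fun z => (F z).det := by
    ext z
    rw [hNF z, det_mul_row, Fintype.prod_sum_type]
    simp
  have hF : AnalyticAt 𝕜 (fun z => (F z).det) z₀ := by
    refine AnalyticAt.matrix_det fun i j => ?_
    rcases j with a | c
    · simpa [F] using (hN i (Sum.inl a)).dslope
    · simpa [F] using hN i (Sum.inr c)
  have hF₀ : F z₀ = fromCols N' (N z₀).toCols₂ := by
    ext i (a | c)
    · simp [F, (hN' i a).deriv]
    · simp [F]
  rw [hdet, analyticOrderAt_mul (by fun_prop) hF, analyticOrderAt_centeredMonomial, ← hF₀]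
  simp [analyticOrderAt_eq_zero, hF]

end Analytic

section Calculus

variable {𝕜 : Type*} [NontriviallyNormedField 𝕜] {m n : Type*} {z₀ : 𝕜}

theorem Matrix.isSymm_of_hasDerivAt {M : 𝕜 → Matrix n n 𝕜} {M' : Matrix n n 𝕜}
    (hsym : ∀ᶠ z in 𝓝 z₀, (M z).IsSymm) (hM : ∀ i j, HasDerivAt (fun z => M z i j) (M' i j) z₀) :
    M'.IsSymm := by
  ext i j
  refine (hM j i).unique ((hM i j).congr_of_eventuallyEq ?_)
  filter_upwards [hsym] with z hz
  exact congr_fun₂ hz i j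

variable [Fintype n]

theorem Matrix.hasDerivAt_mulVec {M : 𝕜 → Matrix m n 𝕜} {M' : Matrix m n 𝕜}
    (hM : ∀ i j, HasDerivAt (fun z => M z i j) (M' i j) z₀) (v : n → 𝕜) :
    HasDerivAt (fun z => M z *ᵥ v) (M' *ᵥ v) z₀ :=
  hasDerivAt_pi.2 fun i => HasDerivAt.fun_sum fun j _ => (hM i j).mul_const (v j)

theorem Matrix.analyticAt_mulVec [Fintype m] {M : 𝕜 → Matrix m n 𝕜}
    (hM : ∀ i j, AnalyticAt 𝕜 (fun z => M z i j) z₀) (v : n → 𝕜) :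
    AnalyticAt 𝕜 (fun z => M z *ᵥ v) z₀ :=
  analyticAt_pi_iff.2 fun i => Finset.analyticAt_fun_sum _ fun j _ => (hM i j).mul analyticAt_const

variable [CompleteSpace 𝕜] {κ : Type*} [Fintype κ] [DecidableEq κ] {M : 𝕜 → Matrix n n 𝕜}

theorem Matrix.toMatrix_mulVecLin_apply_eq_comp (b : Module.Basis κ 𝕜 (n → 𝕜)) (i j : κ) :
    (fun z => LinearMap.toMatrix b b (M z).mulVecLin i j) =
      LinearMap.toContinuousLinearMap (b.coord i) ∘ fun z => M z *ᵥ b j := by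
  ext z; simp [LinearMap.toMatrix_apply]

theorem Matrix.hasDerivAt_toMatrix_mulVecLin {M' : Matrix n n 𝕜} (b : Module.Basis κ 𝕜 (n → 𝕜))
    (hM : ∀ i j, HasDerivAt (fun z => M z i j) (M' i j) z₀) (i j : κ) :
    HasDerivAt (fun z => LinearMap.toMatrix b b (M z).mulVecLin i j)
      (LinearMap.toMatrix b b M'.mulVecLin i j) z₀ := by
  rw [toMatrix_mulVecLin_apply_eq_comp]
  simpa [LinearMap.toMatrix_apply] using
    (LinearMap.toContinuousLinearMap (b.coord i)).hasFDerivAt.comp_hasDerivAt z₀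
      (hasDerivAt_mulVec hM (b j))

theorem Matrix.analyticAt_toMatrix_mulVecLin (b : Module.Basis κ 𝕜 (n → 𝕜))
    (hM : ∀ i j, AnalyticAt 𝕜 (fun z => M z i j) z₀) (i j : κ) :
    AnalyticAt 𝕜 (fun z => LinearMap.toMatrix b b (M z).mulVecLin i j) z₀ := by
  rw [toMatrix_mulVecLin_apply_eq_comp]
  exact (LinearMap.toContinuousLinearMap (b.coord i)).analyticAt _ |>.comp (analyticAt_mulVec hM _)

end Calculus

section LinearAlgebra

theorem Matrix.IsSymm.dotProduct_mulVec_comm {R ι : Type*} [CommSemiring R] [Fintype ι]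
    {A : Matrix ι ι R} (hA : A.IsSymm) (v w : ι → R) : v ⬝ᵥ A *ᵥ w = w ⬝ᵥ A *ᵥ v := by
  rw [dotProduct_mulVec, ← hA, vecMul_transpose, hA, dotProduct_comm]

variable {k E : Type*} [Field k] [AddCommGroup E] [Module k E]

theorem Submodule.exists_isProj (K : Submodule k E) : ∃ p : E →ₗ[k] E, LinearMap.IsProj K p := by
  obtain ⟨K', hK'⟩ := K.exists_isCompl
  exact ⟨K.projection K' hK', Submodule.projection_apply_mem hK',
    fun x hx => Submodule.projection_apply_left hK' ⟨x, hx⟩⟩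

variable [FiniteDimensional k E]

theorem LinearMap.det_ne_zero_iff_injective (f : E →ₗ[k] E) :
    LinearMap.det f ≠ 0 ↔ Function.Injective f := by
  rw [← isUnit_iff_ne_zero, ← LinearMap.isUnit_iff_isUnit_det, LinearMap.isUnit_iff_ker_eq_bot,
    LinearMap.ker_eq_bot]

theorem LinearMap.IsProj.exists_basis_sum {K : Submodule k E} {p : E →ₗ[k] E}
    (hp : LinearMap.IsProj K p) :
    ∃ (s : ℕ) (b : Module.Basis (Fin (Module.finrank k K) ⊕ Fin s) k E),
      (∀ a, b (Sum.inl a) ∈ K) ∧ ∀ c, p (b (Sum.inr c)) = 0 := by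
  let b := ((Module.finBasis k K).prod (Module.finBasis k (LinearMap.ker p))).map
    (K.prodEquivOfIsCompl _ hp.isCompl)
  exact ⟨_, b, fun a => by simp [b], fun c => by simp [b]⟩

theorem Matrix.injective_mulVecLin_add_comp_isProj_iff {ι : Type*} [Fintype ι] [DecidableEq ι]
    {A B : Matrix ι ι k} (hA : A.IsSymm) (hB : B.IsSymm) {p : (ι → k) →ₗ[k] ι → k}
    (hp : LinearMap.IsProj (LinearMap.ker A.mulVecLin) p) :
    Function.Injective (A.mulVecLin + B.mulVecLin ∘ₗ p) ↔
      ∀ v, A *ᵥ v = 0 → v ≠ 0 → ∃ w, A *ᵥ w = 0 ∧ v ⬝ᵥ B *ᵥ w ≠ 0 := by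
  have hpA : ∀ x, A *ᵥ p x = 0 := hp.map_mem
  constructor
  · intro hT v hv hv0
    by_contra! hvB
    have hvT : ∀ x, v ⬝ᵥ (A.mulVecLin + B.mulVecLin ∘ₗ p) x = 0 := fun x => by
      simp [dotProduct_add, hA.dotProduct_mulVec_comm v, hv, hvB _ (hpA x)]
    refine hv0 (dotProduct_eq_zero v fun y => ?_)
    obtain ⟨x, rfl⟩ := LinearMap.injective_iff_surjective.mp hT y
    exact hvT x
  · intro hB'
    rw [injective_iff_map_eq_zero]
    intro x hx
    have hx' : A *ᵥ x = -(B *ᵥ p x) := eq_neg_of_add_eq_zero_left hx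
    have hpx : p x = 0 := by
      by_contra hpx
      obtain ⟨w, hw, hne⟩ := hB' (p x) (hpA x) hpx
      apply hne
      rw [hB.dotProduct_mulVec_comm, ← neg_eq_zero, ← dotProduct_neg, ← hx',
        hA.dotProduct_mulVec_comm, hw, dotProduct_zero]
    have hxK : x ∈ LinearMap.ker A.mulVecLin := by simpa [hpx] using hx'
    rw [← hp.map_id x hxK, hpx]

end LinearAlgebra

theorem analyticOrderAt_det_eq_finrank_ker_iff {𝕜 ι : Type*} [NontriviallyNormedField 𝕜]
    [CompleteSpace 𝕜] [Fintype ι] [DecidableEq ι] {M : 𝕜 → Matrix ι ι 𝕜} {M' : Matrix ι ι 𝕜}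
    {z₀ : 𝕜} (hM : ∀ i j, AnalyticAt 𝕜 (fun z => M z i j) z₀)
    (hM' : ∀ i j, HasDerivAt (fun z => M z i j) (M' i j) z₀) (hA : (M z₀).IsSymm)
    (hB : M'.IsSymm) :
    analyticOrderAt (fun z => (M z).det) z₀ = Module.finrank 𝕜 (LinearMap.ker (M z₀).mulVecLin) ↔
      ∀ v, M z₀ *ᵥ v = 0 → v ≠ 0 → ∃ w, M z₀ *ᵥ w = 0 ∧ v ⬝ᵥ M' *ᵥ w ≠ 0 := by
  obtain ⟨p, hp⟩ := (LinearMap.ker (M z₀).mulVecLin).exists_isProj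
  obtain ⟨s, b, hbK, hbp⟩ := hp.exists_basis_sum
  have hb₀ : ∀ a, M z₀ *ᵥ b (Sum.inl a) = 0 := hbK
  let N : 𝕜 → Matrix _ _ 𝕜 := fun z => LinearMap.toMatrix b b (M z).mulVecLin
  have hdet : (fun z => (M z).det) = fun z => (N z).det := by
    ext z; rw [LinearMap.det_toMatrix, ← toLin'_apply', LinearMap.det_toLin']
  have hcols : fromCols (LinearMap.toMatrix b b M'.mulVecLin).toCols₁ (N z₀).toCols₂ =
      LinearMap.toMatrix b b ((M z₀).mulVecLin + M'.mulVecLin ∘ₗ p) := by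
    ext i (a | c)
    · simp [N, LinearMap.toMatrix_apply, hp.map_id _ (hbK a), hb₀ a]
    · simp [N, LinearMap.toMatrix_apply, hbp c]
  have key := analyticOrderAt_det_eq_card_iff (N := N)
    (N' := (LinearMap.toMatrix b b M'.mulVecLin).toCols₁) (analyticAt_toMatrix_mulVecLin b hM)
    (fun i a => hasDerivAt_toMatrix_mulVecLin b hM' i _)
    (fun i a => by simp [N, LinearMap.toMatrix_apply, hb₀ a])
  rwa [Fintype.card_fin, hcols, LinearMap.det_toMatrix, LinearMap.det_ne_zero_iff_injective,
    injective_mulVecLin_add_comp_isProj_iff hA hB hp, ← hdet] at key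

theorem stmt9_general (U : Set ℂ) (hU : IsOpen U) (z₀ : ℂ) (hz₀ : z₀ ∈ U) (n : ℕ)
    (M : ℂ → Matrix (Fin n) (Fin n) ℂ)
    (hM : ∀ i j, DifferentiableOn ℂ (fun z => M z i j) U)
    (hsym : ∀ z ∈ U, (M z)ᵀ = M z)
    (M' : Matrix (Fin n) (Fin n) ℂ)
    (hM' : ∀ i j, M' i j = deriv (fun z => M z i j) z₀)
    (k : ℕ) (g : ℂ → ℂ) (hg : AnalyticAt ℂ g z₀) (hg0 : g z₀ ≠ 0)
    (hfac : ∀ᶠ z in 𝓝 z₀, (M z).det = (z - z₀) ^ k * g z) :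
    k = Module.finrank ℂ (LinearMap.ker (M z₀).mulVecLin) ↔
      ∀ v : Fin n → ℂ, (M z₀).mulVec v = 0 → v ≠ 0 →
        ∃ w : Fin n → ℂ, (M z₀).mulVec w = 0 ∧ v ⬝ᵥ M'.mulVec w ≠ 0 := by
  have hU₀ : U ∈ 𝓝 z₀ := hU.mem_nhds hz₀
  have hMa : ∀ i j, AnalyticAt ℂ (fun z => M z i j) z₀ := fun i j => (hM i j).analyticAt hU₀
  have hMd : ∀ i j, HasDerivAt (fun z => M z i j) (M' i j) z₀ := fun i j =>
    hM' i j ▸ ((hM i j).differentiableAt hU₀).hasDerivAt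
  have horder : analyticOrderAt (fun z => (M z).det) z₀ = k :=
    (AnalyticAt.matrix_det hMa).analyticOrderAt_eq_natCast.2 ⟨g, hg, hg0, by simpa using hfac⟩
  rw [← Nat.cast_inj (R := ℕ∞), ← horder]
  exact analyticOrderAt_det_eq_finrank_ker_iff hMa hMd (hsym z₀ hz₀)
    (isSymm_of_hasDerivAt (eventually_of_mem hU₀ hsym) hMd)

/-- **Semi-simplicity criterion.** Let `M` be holomorphic and
complex-symmetric near `z₀`, with `M(z₀)` singular, and suppose `det M(z)` has a zero of
finite order `k` at `z₀` (i.e. `det M(z) = (z − z₀)^k·g(z)` with `g` analytic,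
`g(z₀) ≠ 0`). Then `k = dim ker M(z₀)` (algebraic = geometric multiplicity, Laurent
order one pole of `M(z)⁻¹`) iff for every nonzero `v ∈ ker M(z₀)` there exists
`w ∈ ker M(z₀)` with `vᵀ·M'(z₀)·w ≠ 0`. -/
theorem stmt9 (U : Set ℂ) (hU : IsOpen U) (z₀ : ℂ) (hz₀ : z₀ ∈ U) (n : ℕ)
    (M : ℂ → Matrix (Fin n) (Fin n) ℂ)
    (hM : ∀ i j, DifferentiableOn ℂ (fun z => M z i j) U)
    (hsym : ∀ z ∈ U, (M z)ᵀ = M z)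
    (M' : Matrix (Fin n) (Fin n) ℂ)
    (hM' : ∀ i j, M' i j = deriv (fun z => M z i j) z₀)
    (hsing : (M z₀).det = 0)
    (k : ℕ) (g : ℂ → ℂ) (hg : AnalyticAt ℂ g z₀) (hg0 : g z₀ ≠ 0)
    (hfac : ∀ᶠ z in 𝓝 z₀, (M z).det = (z - z₀) ^ k * g z) :
    k = Module.finrank ℂ (LinearMap.ker (M z₀).mulVecLin) ↔
      ∀ v : Fin n → ℂ, (M z₀).mulVec v = 0 → v ≠ 0 →
        ∃ w : Fin n → ℂ, (M z₀).mulVec w = 0 ∧ v ⬝ᵥ M'.mulVec w ≠ 0 :=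
  stmt9_general U hU z₀ hz₀ n M hM hsym M' hM' k g hg hg0 hfac
end

section
/- The two R-matrix forms of the scattering matrix agree: O⁻¹·(1 + Q·S·Q⁻¹·D)·I = I·(1 + D·Q⁻¹·S·Q)·O⁻¹, and this common matrix U is complex-symmetric: Uᵀ = U. -/
/-!
Diagonal matrices are symmetric and commute with each other, and `Q⁻¹ D I = 2i Q O⁻¹`, so
`U = O⁻¹ I + 2i · O⁻¹ Q S Q O⁻¹`, which is visibly symmetric when `S` is. On the other hand,
transposing `O⁻¹ (1 + Q S Q⁻¹ D) I` term by term gives `I (1 + D Q⁻¹ S Q) O⁻¹`, so the two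
forms of `U` are `U` and `Uᵀ`, and they agree.
-/

open Matrix

namespace Matrix

variable {ι α : Type*} [Fintype ι] [DecidableEq ι]

theorem IsDiag.mul [NonUnitalNonAssocSemiring α] {A B : Matrix ι ι α} (hA : A.IsDiag)
    (hB : B.IsDiag) : (A * B).IsDiag := by
  rw [← hA.diagonal_diag, ← hB.diagonal_diag, diagonal_mul_diagonal]
  exact isDiag_diagonal _

theorem IsDiag.commute [NonUnitalNonAssocCommSemiring α] {A B : Matrix ι ι α}
    (hA : A.IsDiag) (hB : B.IsDiag) : Commute A B := by
  rw [← hA.diagonal_diag, ← hB.diagonal_diag]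
  exact commute_diagonal _ _

theorem IsDiag.inv [CommRing α] {A : Matrix ι ι α} (hA : A.IsDiag) : A⁻¹.IsDiag := by
  rw [← hA.diagonal_diag, inv_diagonal]
  exact isDiag_diagonal _

variable [CommRing α]

theorem transpose_inv_mul_one_add_mul_mul {A B C E S : Matrix ι ι α} (hA : A.IsSymm)
    (hB : B.IsSymm) (hC : C.IsSymm) (hE : E.IsSymm) (hS : S.IsSymm) :
    (A⁻¹ * (1 + C * S * C⁻¹ * E) * B)ᵀ = B * (1 + E * C⁻¹ * S * C) * A⁻¹ := by
  simp only [transpose_mul, transpose_add, transpose_one, transpose_nonsing_inv, hA.eq, hB.eq,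
    hC.eq, hE.eq, hS.eq, Matrix.mul_assoc]

theorem inv_mul_smul_sq_mul_inv_mul {O I Q : Matrix ι ι α} (hOI : Commute O I)
    (hQ : IsUnit Q.det) (hI : IsUnit I.det) (c : α) :
    Q⁻¹ * (c • (Q ^ 2 * (O * I)⁻¹)) * I = c • (Q * O⁻¹) := by
  rw [hOI.eq, mul_inv_rev]
  simp only [Matrix.smul_mul, Matrix.mul_smul, sq, Matrix.mul_assoc]
  rw [nonsing_inv_mul _ hI, ← Matrix.mul_assoc Q⁻¹, nonsing_inv_mul _ hQ, Matrix.one_mul,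
    Matrix.mul_one]

theorem inv_mul_one_add_mul_mul_eq {O I Q S : Matrix ι ι α} (hOI : Commute O I)
    (hQ : IsUnit Q.det) (hI : IsUnit I.det) (c : α) :
    O⁻¹ * (1 + Q * S * Q⁻¹ * (c • (Q ^ 2 * (O * I)⁻¹))) * I =
      O⁻¹ * I + c • (O⁻¹ * Q * S * Q * O⁻¹) := by
  set D := c • (Q ^ 2 * (O * I)⁻¹)
  have hassoc : O⁻¹ * (Q * S * Q⁻¹ * D) * I = O⁻¹ * Q * S * (Q⁻¹ * D * I) := by
    simp only [Matrix.mul_assoc]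
  rw [Matrix.mul_add, Matrix.add_mul, Matrix.mul_one, hassoc,
    inv_mul_smul_sq_mul_inv_mul hOI hQ hI c, Matrix.mul_smul]
  simp only [Matrix.mul_assoc]

end Matrix

theorem stmt10_general (n : ℕ) (Om Iw Q D S : Matrix (Fin n) (Fin n) ℂ)
    (hOd : Om.IsDiag) (hId : Iw.IsDiag) (hQd : Q.IsDiag)
    (hIu : IsUnit Iw.det) (hQu : IsUnit Q.det)
    (hD : D = (2 * Complex.I) • (Q ^ 2 * (Om * Iw)⁻¹))
    (hS : Sᵀ = S) :
    Om⁻¹ * (1 + Q * S * Q⁻¹ * D) * Iw = Iw * (1 + D * Q⁻¹ * S * Q) * Om⁻¹ ∧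
      (Om⁻¹ * (1 + Q * S * Q⁻¹ * D) * Iw)ᵀ = Om⁻¹ * (1 + Q * S * Q⁻¹ * D) * Iw := by
  have hDd : D.IsDiag := by
    rw [hD, sq]
    exact ((hQd.mul hQd).mul (hOd.mul hId).inv).smul _
  have hsymm : (Om⁻¹ * (1 + Q * S * Q⁻¹ * D) * Iw)ᵀ = Om⁻¹ * (1 + Q * S * Q⁻¹ * D) * Iw := by
    rw [hD, inv_mul_one_add_mul_mul_eq (hOd.commute hId) hQu hIu]
    simp only [transpose_add, transpose_smul, transpose_mul, hOd.inv.isSymm.eq, hId.isSymm.eq,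
      hQd.isSymm.eq, hS, Matrix.mul_assoc, (hId.commute hOd.inv).eq]
  refine ⟨?_, hsymm⟩
  rw [← hsymm]
  exact transpose_inv_mul_one_add_mul_mul hOd.isSymm hId.isSymm hQd.isSymm hDd.isSymm hS

/-- The two R-matrix forms of the scattering matrix agree,
`O⁻¹·(1 + Q·S·Q⁻¹·D)·I = I·(1 + D·Q⁻¹·S·Q)·O⁻¹`, and this common matrix `U` is
complex-symmetric: `Uᵀ = U`. Here `O, I, Q` are diagonal invertible, `D = 2i·Q²·(O·I)⁻¹`
is the diagonal Wronskian matrix, and `S` (the Kapur–Peierls operator) is symmetric. -/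
theorem stmt10 (n : ℕ) (Om Iw Q D S : Matrix (Fin n) (Fin n) ℂ)
    (hOd : Om.IsDiag) (hId : Iw.IsDiag) (hQd : Q.IsDiag)
    (hOu : IsUnit Om.det) (hIu : IsUnit Iw.det) (hQu : IsUnit Q.det)
    (hD : D = (2 * Complex.I) • (Q ^ 2 * (Om * Iw)⁻¹))
    (hS : Sᵀ = S) :
    Om⁻¹ * (1 + Q * S * Q⁻¹ * D) * Iw = Iw * (1 + D * Q⁻¹ * S * Q) * Om⁻¹ ∧
      (Om⁻¹ * (1 + Q * S * Q⁻¹ * D) * Iw)ᵀ = Om⁻¹ * (1 + Q * S * Q⁻¹ * D) * Iw :=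
  stmt10_general n Om Iw Q D S hOd hId hQd hIu hQu hD hS
end

section
/- (Specular symmetry of the radioactive poles.) The level determinant satisfies the functional equation conj( det A⁻¹(−conj k) ) = det A⁻¹(k) for every k ∈ ℂ. Consequently, if k₀ is a radioactive pole (det A⁻¹(k₀) = 0), then so is −conj(k₀): det A⁻¹(−conj k₀) = 0. -/
open Matrix ComplexConjugate

/-!
Entrywise complex conjugation is a ring homomorphism, so it commutes with the determinant.
Since the level energies and reduced widths are real, conjugating the entries of `A⁻¹(−k̄)`
only conjugates the energy `t·k̄²` and the channel terms `L_c(−a_c k̄) − B_c`, and the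
conjugacy relation of `L_c` turns the result into `A⁻¹(k)`.
-/

namespace RMatrix

variable {n m : Type*}

lemma map_conj_map_ofReal (γ : Matrix n m ℝ) :
    (γ.map ((↑) : ℝ → ℂ)).map conj = γ.map ((↑) : ℝ → ℂ) := by
  ext i j
  simp

variable [DecidableEq n] [Fintype m] [DecidableEq m]

/-- `A⁻¹(k)` with the energy `t·k²` abstracted to `s` and the channel terms `L_c(a_c k) − B_c`
to `d c`. -/
noncomputable def levelMatrix (e : n → ℝ) (γ : Matrix n m ℝ) (s : ℂ) (d : m → ℂ) :
    Matrix n n ℂ :=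
  diagonal (fun i => (e i : ℂ)) - s • (1 : Matrix n n ℂ)
    - γ.map ((↑) : ℝ → ℂ) * diagonal d * (γ.map ((↑) : ℝ → ℂ))ᵀ

lemma map_conj_levelMatrix (e : n → ℝ) (γ : Matrix n m ℝ) (s : ℂ) (d : m → ℂ) :
    (levelMatrix e γ s d).map conj = levelMatrix e γ (conj s) (fun c => conj (d c)) := by
  rw [levelMatrix, levelMatrix, Matrix.map_sub _ (map_sub conj), Matrix.map_sub _ (map_sub conj),
    Matrix.map_mul, Matrix.map_mul, transpose_map, map_conj_map_ofReal,
    diagonal_map (map_zero conj), diagonal_map (map_zero conj),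
    map_smul' _ _ _ (map_mul conj), Matrix.map_one _ (map_zero conj) (map_one conj)]
  simp only [Complex.conj_ofReal]

lemma conj_det_levelMatrix [Fintype n] (e : n → ℝ) (γ : Matrix n m ℝ) (s : ℂ)
    (d : m → ℂ) :
    conj (levelMatrix e γ s d).det = (levelMatrix e γ (conj s) (fun c => conj (d c))).det := by
  rw [RingHom.map_det, RingHom.mapMatrix_apply, map_conj_levelMatrix]

end RMatrix

open RMatrix

/-- **Specular symmetry of the radioactive poles.** If each channel's
analytically continued reduced logarithmic derivative satisfies
`conj(L_c(−conj z)) = L_c(z)`, then the level determinant satisfies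
`conj(det A⁻¹(−conj k)) = det A⁻¹(k)`; consequently if `k₀` is a radioactive pole
(`det A⁻¹(k₀) = 0`) then so is `−conj k₀`. -/
theorem stmt14 (N m : ℕ) (e : Fin N → ℝ) (γ : Matrix (Fin N) (Fin m) ℝ)
    (B : Fin m → ℝ) (a : Fin m → ℝ) (t : ℝ)
    (L : Fin m → ℂ → ℂ)
    (hLc : ∀ c (z : ℂ), starRingEnd ℂ (L c (-(starRingEnd ℂ z))) = L c z)
    (Ainv : ℂ → Matrix (Fin N) (Fin N) ℂ)
    (hAinv : ∀ k : ℂ, Ainv k =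
      Matrix.diagonal (fun lam => (e lam : ℂ)) - ((t : ℂ) * k ^ 2) • (1 : Matrix (Fin N) (Fin N) ℂ)
        - (γ.map ((↑) : ℝ → ℂ)) *
            Matrix.diagonal (fun c => L c ((a c : ℂ) * k) - (B c : ℂ)) *
            (γ.map ((↑) : ℝ → ℂ))ᵀ) :
    (∀ k : ℂ, starRingEnd ℂ ((Ainv (-(starRingEnd ℂ k))).det) = (Ainv k).det) ∧
      ∀ k₀ : ℂ, (Ainv k₀).det = 0 → (Ainv (-(starRingEnd ℂ k₀))).det = 0 := by
  have hAinv' : ∀ k, Ainv k = levelMatrix e γ (t * k ^ 2) (fun c => L c (a c * k) - B c) := hAinv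
  have reflect : ∀ k : ℂ, conj (Ainv (-conj k)).det = (Ainv k).det := by
    intro k
    have hL : ∀ c, conj (L c (a c * -conj k)) = L c (a c * k) := fun c => by
      simpa only [map_mul, Complex.conj_ofReal, mul_neg] using hLc c (a c * k)
    rw [hAinv', hAinv', conj_det_levelMatrix]
    simp only [map_mul, map_sub, map_pow, Complex.conj_ofReal, Complex.conj_conj, neg_sq, hL]
  refine ⟨reflect, fun k₀ hk₀ => ?_⟩
  rwa [← reflect k₀, map_eq_zero] at hk₀
end

section
/- If G and G⁻¹ − γ·Λ·γᵀ are invertible, then 1 − R·Λ is invertible and the Kapur–Peierls operator equals its level-matrix form: (1 − R·Λ)⁻¹ · R = γᵀ · (G⁻¹ − γ·Λ·γᵀ)⁻¹ · γ, i.e. R_L = γᵀ·A·γ. -/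
/-!
Writing `R = δ G γ` and `A⁻¹ = G⁻¹ - γ Λ δ`, the push-through identity
`(1 - δ G γ Λ) δ = δ (1 - G γ Λ δ) = δ G A⁻¹` does everything: Sylvester's determinant
identity turns it into `det (1 - R Λ) = det G · det A⁻¹`, and multiplying it on the right by
`A γ` gives `(1 - R Λ) (δ A γ) = R`.
-/

open Matrix

namespace Matrix

variable {n m K : Type*} [Fintype n] [Fintype m] [DecidableEq n] [CommRing K]

theorem one_sub_mul_eq_mul_nonsing_inv_sub {G : Matrix n n K} (hG : IsUnit G.det)
    (γ : Matrix n m K) (Λ : Matrix m m K) (δ : Matrix m n K) :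
    1 - G * γ * Λ * δ = G * (G⁻¹ - γ * Λ * δ) := by
  rw [Matrix.mul_sub, mul_nonsing_inv G hG, Matrix.mul_assoc, Matrix.mul_assoc, Matrix.mul_assoc]

variable [DecidableEq m]

theorem one_sub_mul_mul_mul_mul (δ : Matrix m n K) (G : Matrix n n K) (γ : Matrix n m K)
    (Λ : Matrix m m K) : (1 - δ * G * γ * Λ) * δ = δ * (1 - G * γ * Λ * δ) := by
  simp only [Matrix.sub_mul, Matrix.mul_sub, Matrix.one_mul, Matrix.mul_one, Matrix.mul_assoc]

theorem det_one_sub_mul_mul_mul {G : Matrix n n K} (hG : IsUnit G.det)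
    (δ : Matrix m n K) (γ : Matrix n m K) (Λ : Matrix m m K) :
    (1 - δ * G * γ * Λ).det = G.det * (G⁻¹ - γ * Λ * δ).det := by
  rw [← det_mul, ← one_sub_mul_eq_mul_nonsing_inv_sub hG,
    show δ * G * γ * Λ = δ * (G * γ * Λ) by simp only [Matrix.mul_assoc],
    det_one_sub_mul_comm]

theorem one_sub_mul_mul_mul_nonsing_inv {G : Matrix n n K} (hG : IsUnit G.det)
    (δ : Matrix m n K) (γ : Matrix n m K) (Λ : Matrix m m K)
    (hA : IsUnit (G⁻¹ - γ * Λ * δ).det) :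
    (1 - δ * G * γ * Λ) * (δ * (G⁻¹ - γ * Λ * δ)⁻¹ * γ) = δ * G * γ := by
  calc (1 - δ * G * γ * Λ) * (δ * (G⁻¹ - γ * Λ * δ)⁻¹ * γ)
      = δ * (1 - G * γ * Λ * δ) * (G⁻¹ - γ * Λ * δ)⁻¹ * γ := by
        rw [← one_sub_mul_mul_mul_mul]; simp only [Matrix.mul_assoc]
    _ = δ * G * ((G⁻¹ - γ * Λ * δ) * (G⁻¹ - γ * Λ * δ)⁻¹) * γ := by
        rw [one_sub_mul_eq_mul_nonsing_inv_sub hG]; simp only [Matrix.mul_assoc]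
    _ = δ * G * γ := by rw [mul_nonsing_inv _ hA, Matrix.mul_one]

end Matrix

/-- With `R = γᵀ·G·γ` the R-matrix, `A⁻¹ = G⁻¹ − γ·Λ·γᵀ` the inverse
level matrix: if `G` and `G⁻¹ − γ·Λ·γᵀ` are invertible, then `1 − R·Λ` is invertible and
the Kapur–Peierls operator equals its level-matrix form:
`(1 − R·Λ)⁻¹·R = γᵀ·(G⁻¹ − γ·Λ·γᵀ)⁻¹·γ`, i.e. `R_L = γᵀ·A·γ`. -/
theorem stmt18 (N m : ℕ) (G : Matrix (Fin N) (Fin N) ℂ)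
    (γ : Matrix (Fin N) (Fin m) ℂ) (Λ : Matrix (Fin m) (Fin m) ℂ)
    (hG : IsUnit G.det) (hA : IsUnit (G⁻¹ - γ * Λ * γᵀ).det) :
    IsUnit (1 - (γᵀ * G * γ) * Λ).det ∧
      (1 - (γᵀ * G * γ) * Λ)⁻¹ * (γᵀ * G * γ) = γᵀ * (G⁻¹ - γ * Λ * γᵀ)⁻¹ * γ := by
  have hRΛ : IsUnit (1 - (γᵀ * G * γ) * Λ).det := by
    rw [det_one_sub_mul_mul_mul hG]
    exact hG.mul hA
  refine ⟨hRΛ, ?_⟩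
  nth_rw 2 [← one_sub_mul_mul_mul_nonsing_inv hG γᵀ γ Λ hA]
  exact nonsing_inv_mul_cancel_left _ _ hRΛ
end
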